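/- arXiv:2012.13145 — 5 statements merged into one kernel-verified Lean document; each statement's English description precedes it below -/
import Mathlib

section
/- For the transfer operators 𝓛_k (k ≥ 1) of a piecewise affine expanding Markov map with expansion constant λ > 1, acting on the piecewise Sobolev space W^{r,1} with norm ‖h‖_r = Σ_{l=0}^r ∫|h^{(l)}|, one has the Lasota–Yorke inequalities: ‖𝓛_k h‖_r ≤ λ^{-(k-1)} ‖h‖_r, and for r ≥ 1, ‖𝓛_k h‖_r ≤ λ^{-(k+r-1)} ‖h‖_r + λ^{-(k-1)} ‖h‖_{r-1}. -/
/-!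
On a piece `I_i`, `𝓛_m h` is a sum of terms `λ_j^{-m} h ∘ g_j` over the inverse branches `g_j`
admissible from `I_i`. The affine change of variables `y = g_j x` turns `∫_{I_i} |h ∘ g_j|` into
`λ_j ∫_{g_j(I_i)} |h|`, and by the Markov property the images `g_j(I_i)` are disjoint subsets of
`I_j`; hence `∫ |𝓛_m h| ≤ ∑_j λ_j^{1-m} ∫_{I_j} |h| ≤ λ^{-(m-1)} ∫ |h|`. Since
`(𝓛_k h)^{(l)} = 𝓛_{k+l} h^{(l)}`, applying this with `m = k + l` bounds every term of
`‖𝓛_k h‖_r`, the top one with the sharper factor `λ^{-(k+r-1)}`.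
-/

open Set MeasureTheory Function

section ChangeOfVariables

variable {E : Type*} [NormedAddCommGroup E] [NormedSpace ℝ E] {g : ℝ → ℝ} {c : ℝ} {s : Set ℝ}

theorem setIntegral_image_of_hasDerivAt_const (hg : ∀ x, HasDerivAt g c x) (hc : 0 < c)
    (hs : MeasurableSet s) (F : ℝ → E) :
    ∫ x in g '' s, F x = c • ∫ x in s, F (g x) := by
  rw [integral_image_eq_integral_abs_deriv_smul hs (fun x _ => (hg x).hasDerivWithinAt)
    (strictMono_of_hasDerivAt_pos hg fun _ => hc).injective.injOn, abs_of_pos hc,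
    integral_smul]

theorem integrableOn_image_iff_of_hasDerivAt_const (hg : ∀ x, HasDerivAt g c x) (hc : 0 < c)
    (hs : MeasurableSet s) (F : ℝ → E) :
    IntegrableOn F (g '' s) ↔ IntegrableOn (fun x => F (g x)) s := by
  rw [integrableOn_image_iff_integrableOn_abs_deriv_smul hs
    (fun x _ => (hg x).hasDerivWithinAt)
    (strictMono_of_hasDerivAt_pos hg fun _ => hc).injective.injOn]
  exact integrable_smul_iff (abs_pos.2 hc.ne').ne' _

end ChangeOfVariables

theorem sum_setIntegral_le_setIntegral_of_pairwise_disjoint {X ι : Type*} [MeasurableSpace X]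
    {μ : Measure X} {f : X → ℝ} {t : Set X} {s : ι → Set X} (S : Finset ι)
    (hf : 0 ≤ f) (hft : IntegrableOn f t μ) (hs : ∀ i ∈ S, MeasurableSet (s i))
    (hdisj : (S : Set ι).Pairwise (Disjoint on s)) (hst : ∀ i ∈ S, s i ⊆ t) :
    ∑ i ∈ S, ∫ x in s i, f x ∂μ ≤ ∫ x in t, f x ∂μ := by
  rw [← integral_biUnion_finset S hs hdisj fun i hi => hft.mono_set (hst i hi)]
  exact setIntegral_mono_set hft (.of_forall hf) (iUnion₂_subset hst).eventuallyLE

structure IsPiecewiseAffineMarkov {ι : Type*} (I : ι → Set ℝ) (lam : ι → ℝ) (A : ι → ι → ℝ)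
    (g : ι → ℝ → ℝ) (idx : ℝ → ι) : Prop where
  measurableSet : ∀ j, MeasurableSet (I j)
  idx_eq : ∀ j, ∀ x ∈ I j, idx x = j
  lam_pos : ∀ j, 0 < lam j
  transition : ∀ i j, A i j = 0 ∨ A i j = 1
  hasDerivAt : ∀ j x, HasDerivAt (g j) (lam j)⁻¹ x
  mapsTo : ∀ i j, A j i = 1 → MapsTo (g j) (I i) (I j)

-- With `g j` the inverse branch of `f` on the `j`-th piece (where `f' = lam j`) and `A` the
-- transition matrix, this is `𝓛_m φ x = ∑_{y ∈ f⁻¹ x} φ y / f'(y) ^ m`.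
noncomputable def transferOp {ι : Type*} [Fintype ι] (lam : ι → ℝ) (A : ι → ι → ℝ) (g : ι → ℝ → ℝ)
    (idx : ℝ → ι) (m : ℕ) (φ : ℝ → ℝ) (x : ℝ) : ℝ :=
  ∑ j, lam j ^ (-(m : ℤ)) * A j (idx x) * φ (g j x)

namespace IsPiecewiseAffineMarkov

variable {ι : Type*} {I : ι → Set ℝ} {lam : ι → ℝ} {A : ι → ι → ℝ} {g : ι → ℝ → ℝ}
  {idx : ℝ → ι} {φ : ℝ → ℝ}

theorem pairwise_disjoint (hM : IsPiecewiseAffineMarkov I lam A g idx) :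
    Pairwise (Disjoint on I) := fun i j hij =>
  disjoint_left.2 fun x hxi hxj => hij <| (hM.idx_eq i x hxi).symm.trans (hM.idx_eq j x hxj)

theorem injective (hM : IsPiecewiseAffineMarkov I lam A g idx) (j : ι) : Injective (g j) :=
  (strictMono_of_hasDerivAt_pos (hM.hasDerivAt j) fun _ => inv_pos.2 (hM.lam_pos j)).injective

theorem integrableOn_transition_mul_comp (hM : IsPiecewiseAffineMarkov I lam A g idx) {i j : ι}
    (hφ : IntegrableOn φ (I j)) : IntegrableOn (fun x => A j i * φ (g j x)) (I i) := by
  rcases hM.transition j i with hA | hA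
  · simp [hA]
  · rw [hA]
    refine ((integrableOn_image_iff_of_hasDerivAt_const (hM.hasDerivAt j)
      (inv_pos.2 (hM.lam_pos j)) (hM.measurableSet i) φ).1 ?_).const_mul 1
    exact hφ.mono_set ((hM.mapsTo i j hA).image_subset)

theorem transferOp_eqOn [Fintype ι] (hM : IsPiecewiseAffineMarkov I lam A g idx) (m : ℕ)
    (φ : ℝ → ℝ) (i : ι) :
    EqOn (transferOp lam A g idx m φ) (fun x => ∑ j, lam j ^ (-(m : ℤ)) * (A j i * φ (g j x)))
      (I i) := fun x hx => by
  simp only [transferOp, hM.idx_eq i x hx, mul_assoc]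

theorem integrableOn_transferOp [Fintype ι] (hM : IsPiecewiseAffineMarkov I lam A g idx)
    (hφ : ∀ j, IntegrableOn φ (I j)) (m : ℕ) (i : ι) :
    IntegrableOn (transferOp lam A g idx m φ) (I i) :=
  IntegrableOn.congr_fun
    (integrable_finsetSum _ fun j _ => (hM.integrableOn_transition_mul_comp (hφ j)).const_mul _)
    (hM.transferOp_eqOn m φ i).symm (hM.measurableSet i)

theorem setIntegral_abs_transferOp_le [Fintype ι] (hM : IsPiecewiseAffineMarkov I lam A g idx)
    (hφ : ∀ j, IntegrableOn φ (I j)) (m : ℕ) (i : ι) :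
    ∫ x in I i, |transferOp lam A g idx m φ x|
      ≤ ∑ j, lam j ^ (-(m : ℤ)) * (A j i * ∫ x in I i, |φ (g j x)|) := by
  have hterm : ∀ j, IntegrableOn (fun x => lam j ^ (-(m : ℤ)) * (A j i * φ (g j x))) (I i) :=
    fun j => (hM.integrableOn_transition_mul_comp (hφ j)).const_mul _
  have hA : ∀ j, 0 ≤ A j i := fun j => by rcases hM.transition j i with h | h <;> simp [h]
  calc ∫ x in I i, |transferOp lam A g idx m φ x|
      = ∫ x in I i, |∑ j, lam j ^ (-(m : ℤ)) * (A j i * φ (g j x))| :=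
        setIntegral_congr_fun (hM.measurableSet i) fun _ hx =>
          congrArg abs (hM.transferOp_eqOn m φ i hx)
    _ ≤ ∫ x in I i, ∑ j, |lam j ^ (-(m : ℤ)) * (A j i * φ (g j x))| :=
        integral_mono_of_nonneg (.of_forall fun _ => abs_nonneg _)
          (integrable_finsetSum _ fun j _ => (hterm j).abs)
          (.of_forall fun _ => Finset.abs_sum_le_sum_abs _ _)
    _ = ∑ j, lam j ^ (-(m : ℤ)) * (A j i * ∫ x in I i, |φ (g j x)|) := by
        rw [integral_finsetSum _ fun j _ => (hterm j).abs]
        refine Finset.sum_congr rfl fun j _ => ?_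
        simp only [abs_mul, abs_of_pos (zpow_pos (hM.lam_pos j) _), abs_of_nonneg (hA j),
          integral_const_mul]

theorem sum_transition_mul_setIntegral_comp_le [Fintype ι]
    (hM : IsPiecewiseAffineMarkov I lam A g idx) {j : ι} (hφ : IntegrableOn φ (I j)) :
    ∑ i, A j i * ∫ x in I i, |φ (g j x)| ≤ lam j * ∫ x in I j, |φ x| := by
  classical
  have hchange : ∀ i, ∫ x in I i, |φ (g j x)| = lam j * ∫ x in g j '' I i, |φ x| := by
    intro i
    rw [setIntegral_image_of_hasDerivAt_const (hM.hasDerivAt j) (inv_pos.2 (hM.lam_pos j))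
      (hM.measurableSet i), smul_eq_mul, mul_inv_cancel_left₀ (hM.lam_pos j).ne']
  have hsum : ∑ i, A j i * ∫ x in I i, |φ (g j x)|
      = lam j * ∑ i ∈ Finset.univ.filter (A j · = 1), ∫ x in g j '' I i, |φ x| := by
    rw [Finset.mul_sum, Finset.sum_filter]
    refine Finset.sum_congr rfl fun i _ => ?_
    rcases hM.transition j i with h | h <;> simp [h, hchange]
  rw [hsum]
  refine mul_le_mul_of_nonneg_left ?_ (hM.lam_pos j).le
  refine sum_setIntegral_le_setIntegral_of_pairwise_disjoint _ (fun _ => abs_nonneg _) hφ.abs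
    (fun i _ => (hM.measurableSet i).image_of_continuousOn_injOn
      (fun x _ => (hM.hasDerivAt j x).continuousAt.continuousWithinAt) (hM.injective j).injOn)
    (fun a _ b _ hab => (disjoint_image_iff (hM.injective j)).2 (hM.pairwise_disjoint hab))
    fun i hi => (hM.mapsTo i j (Finset.mem_filter.1 hi).2).image_subset

theorem integral_abs_transferOp_le [Fintype ι] (hM : IsPiecewiseAffineMarkov I lam A g idx)
    {lam0 : ℝ} (hlam0 : 0 < lam0) (hlam : ∀ j, lam0 ≤ lam j) {m : ℕ} (hm : 1 ≤ m)
    (hφ : IntegrableOn φ (⋃ j, I j)) :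
    ∫ x in ⋃ j, I j, |transferOp lam A g idx m φ x|
      ≤ (lam0 ^ (m - 1))⁻¹ * ∫ x in ⋃ j, I j, |φ x| := by
  have hφj : ∀ j, IntegrableOn φ (I j) := fun j => hφ.mono_set (subset_iUnion I j)
  have hcoef : ∀ j, lam j ^ (-(m : ℤ)) * lam j ≤ (lam0 ^ (m - 1))⁻¹ := by
    intro j
    have hpow : lam j ^ (-(m : ℤ)) * lam j = (lam j ^ (m - 1))⁻¹ := by
      obtain ⟨n, rfl⟩ := Nat.exists_eq_add_of_le' hm
      rw [zpow_neg, zpow_natCast, pow_succ, mul_inv, inv_mul_cancel_right₀ (hM.lam_pos j).ne',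
        Nat.add_sub_cancel]
    rw [hpow]
    exact inv_anti₀ (pow_pos hlam0 _) (pow_le_pow_left₀ hlam0.le (hlam j) _)
  rw [integral_iUnion_fintype hM.measurableSet hM.pairwise_disjoint
      fun i => (hM.integrableOn_transferOp hφj m i).abs,
    integral_iUnion_fintype hM.measurableSet hM.pairwise_disjoint fun j => (hφj j).abs,
    Finset.mul_sum]
  calc ∑ i, ∫ x in I i, |transferOp lam A g idx m φ x|
      ≤ ∑ i, ∑ j, lam j ^ (-(m : ℤ)) * (A j i * ∫ x in I i, |φ (g j x)|) :=
        Finset.sum_le_sum fun i _ => hM.setIntegral_abs_transferOp_le hφj m i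
    _ = ∑ j, lam j ^ (-(m : ℤ)) * ∑ i, A j i * ∫ x in I i, |φ (g j x)| := by
        rw [Finset.sum_comm]
        simp only [Finset.mul_sum]
    _ ≤ ∑ j, lam j ^ (-(m : ℤ)) * (lam j * ∫ x in I j, |φ x|) :=
        Finset.sum_le_sum fun j _ => mul_le_mul_of_nonneg_left
          (hM.sum_transition_mul_setIntegral_comp_le (hφj j)) (zpow_pos (hM.lam_pos j) _).le
    _ ≤ ∑ j, (lam0 ^ (m - 1))⁻¹ * ∫ x in I j, |φ x| :=
        Finset.sum_le_sum fun j _ => by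
          rw [← mul_assoc]
          exact mul_le_mul_of_nonneg_right (hcoef j) (integral_nonneg fun _ => abs_nonneg _)

end IsPiecewiseAffineMarkov

theorem sum_range_le_of_le_inv_pow_mul {θ : ℝ} (hθ : 1 ≤ θ) {k r : ℕ} {a b : ℕ → ℝ}
    (ha : ∀ l, 0 ≤ a l) (hb : ∀ l ≤ r, b l ≤ (θ ^ (k + l - 1))⁻¹ * a l) :
    ∑ l ∈ Finset.range (r + 1), b l ≤ (θ ^ (k - 1))⁻¹ * ∑ l ∈ Finset.range (r + 1), a l ∧
      ∑ l ∈ Finset.range (r + 1), b l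
        ≤ (θ ^ (k + r - 1))⁻¹ * ∑ l ∈ Finset.range (r + 1), a l
          + (θ ^ (k - 1))⁻¹ * ∑ l ∈ Finset.range r, a l := by
  have hb' : ∀ l ≤ r, b l ≤ (θ ^ (k - 1))⁻¹ * a l := fun l hl =>
    (hb l hl).trans <| mul_le_mul_of_nonneg_right
      (inv_anti₀ (pow_pos (zero_lt_one.trans_le hθ) _) (pow_le_pow_right₀ hθ (by omega))) (ha l)
  have hsum : ∀ n ≤ r + 1,
      ∑ l ∈ Finset.range n, b l ≤ (θ ^ (k - 1))⁻¹ * ∑ l ∈ Finset.range n, a l := fun n hn => by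
    rw [Finset.mul_sum]
    exact Finset.sum_le_sum fun l hl => hb' l (by have := Finset.mem_range.1 hl; omega)
  refine ⟨hsum (r + 1) le_rfl, ?_⟩
  have hlast : b r ≤ (θ ^ (k + r - 1))⁻¹ * ∑ l ∈ Finset.range (r + 1), a l :=
    (hb r le_rfl).trans <| mul_le_mul_of_nonneg_left
      (Finset.single_le_sum (fun l _ => ha l) (Finset.self_mem_range_succ r))
      (inv_nonneg.2 (pow_nonneg (zero_le_one.trans hθ) _))
  rw [Finset.sum_range_succ]
  linarith [hsum r (Nat.le_succ r)]

theorem stmt1_general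
    (N : ℕ) (I : Fin N → Set ℝ)
    (hIopen : ∀ j, ∃ a b : ℝ, a < b ∧ I j = Set.Ioo a b)
    (lam : Fin N → ℝ) (lam0 : ℝ) (hlam0 : 1 < lam0)
    (hlam : ∀ j, lam0 ≤ lam j)
    (A : Fin N → Fin N → ℝ) (hA01 : ∀ i j, A i j = 0 ∨ A i j = 1)
    (g : Fin N → ℝ → ℝ)
    (hg : ∀ j x, HasDerivAt (g j) (lam j)⁻¹ x)
    (hgI : ∀ i j, A j i = 1 → ∀ x ∈ I i, g j x ∈ I j)
    (idx : ℝ → Fin N) (hidx : ∀ j, ∀ x ∈ I j, idx x = j)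
    (L : ℕ → (ℝ → ℝ) → (ℝ → ℝ))
    (hL : ∀ m φ x, L m φ x = ∑ j, (lam j) ^ (-(m : ℤ)) * A j (idx x) * φ (g j x))
    (r k : ℕ) (hk : 1 ≤ k)
    (dh : ℕ → ℝ → ℝ)
    (U : Set ℝ) (hU : U = ⋃ j, I j)
    (hint : ∀ l ≤ r, IntegrableOn (dh l) U) :
    (∑ l ∈ Finset.range (r + 1), ∫ x in U, |L (k + l) (dh l) x|)
        ≤ (lam0 ^ (k - 1))⁻¹ * ∑ l ∈ Finset.range (r + 1), ∫ x in U, |dh l x| ∧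
      (1 ≤ r →
        (∑ l ∈ Finset.range (r + 1), ∫ x in U, |L (k + l) (dh l) x|)
          ≤ (lam0 ^ (k + r - 1))⁻¹ * (∑ l ∈ Finset.range (r + 1), ∫ x in U, |dh l x|)
            + (lam0 ^ (k - 1))⁻¹ * (∑ l ∈ Finset.range r, ∫ x in U, |dh l x|)) := by
  have hlam0pos : 0 < lam0 := zero_lt_one.trans hlam0
  have hM : IsPiecewiseAffineMarkov I lam A g idx :=
    { measurableSet := fun j => by
        obtain ⟨a, b, -, hI⟩ := hIopen j
        exact hI ▸ measurableSet_Ioo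
      idx_eq := hidx
      lam_pos := fun j => hlam0pos.trans_le (hlam j)
      transition := hA01
      hasDerivAt := hg
      mapsTo := hgI }
  have hLeq : L = transferOp lam A g idx := funext fun m => funext fun φ => funext (hL m φ)
  subst hLeq hU
  have hbound := sum_range_le_of_le_inv_pow_mul hlam0.le
    (fun l => integral_nonneg fun x => abs_nonneg (dh l x))
    fun l hl => hM.integral_abs_transferOp_le hlam0pos hlam (m := k + l) (by omega) (hint l hl)
  exact ⟨hbound.1, fun _ => hbound.2⟩

/-- Lasota–Yorke inequalities for the transfer operators `𝓛_k` (`k ≥ 1`) of a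
piecewise affine expanding Markov map on the piecewise Sobolev space `W^{r,1}`. The `W^{r,1}`
norm of `𝓛_k h` is expressed through its piecewise derivatives `(𝓛_k h)^{(l)} = 𝓛_{k+l} h^{(l)}`. -/
theorem stmt1
    (N : ℕ) (I : Fin N → Set ℝ)
    (hIopen : ∀ j, ∃ a b : ℝ, a < b ∧ I j = Set.Ioo a b)
    (lam : Fin N → ℝ) (lam0 : ℝ) (hlam0 : 1 < lam0)
    (hlam : ∀ j, lam0 ≤ lam j)
    (A : Fin N → Fin N → ℝ) (hA01 : ∀ i j, A i j = 0 ∨ A i j = 1)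
    (g : Fin N → ℝ → ℝ)
    (hg : ∀ j x, HasDerivAt (g j) (lam j)⁻¹ x)
    (hgI : ∀ i j, A j i = 1 → ∀ x ∈ I i, g j x ∈ I j)
    (idx : ℝ → Fin N) (hidx : ∀ j, ∀ x ∈ I j, idx x = j)
    (L : ℕ → (ℝ → ℝ) → (ℝ → ℝ))
    (hL : ∀ m φ x, L m φ x = ∑ j, (lam j) ^ (-(m : ℤ)) * A j (idx x) * φ (g j x))
    (r k : ℕ) (hk : 1 ≤ k) (h : ℝ → ℝ)
    (dh : ℕ → ℝ → ℝ) (hdh0 : dh 0 = h)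
    (hdh : ∀ l < r, ∀ j, ∀ x ∈ I j, HasDerivAt (dh l) (dh (l + 1) x) x)
    (U : Set ℝ) (hU : U = ⋃ j, I j)
    (hint : ∀ l ≤ r, IntegrableOn (dh l) U) :
    (∑ l ∈ Finset.range (r + 1), ∫ x in U, |L (k + l) (dh l) x|)
        ≤ (lam0 ^ (k - 1))⁻¹ * ∑ l ∈ Finset.range (r + 1), ∫ x in U, |dh l x| ∧
      (1 ≤ r →
        (∑ l ∈ Finset.range (r + 1), ∫ x in U, |L (k + l) (dh l) x|)
          ≤ (lam0 ^ (k + r - 1))⁻¹ * (∑ l ∈ Finset.range (r + 1), ∫ x in U, |dh l x|)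
            + (lam0 ^ (k - 1))⁻¹ * (∑ l ∈ Finset.range r, ∫ x in U, |dh l x|)) :=
  stmt1_general N I hIopen lam lam0 hlam0 hlam A hA01 g hg hgI idx hidx L hL r k hk dh U hU hint
end

section
/- For the transfer operator 𝓛_0 of a piecewise affine expanding Markov map (with derivative bounded in absolute value by Γ_0 = ‖f'‖_∞) acting on W^{r,1}, r ≥ 1: ‖𝓛_0 h‖_r ≤ Γ_0 ‖h‖_r and ‖𝓛_0 h‖_r ≤ λ^{-(r-1)} ‖h‖_r + Γ_0 ‖h‖_{r-1}. -/
/-!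
The inverse branches `g j` have constant derivative `λ_j⁻¹`, so the change of variables `y = g_j x`
turns `∫ |φ ∘ g_j|` over the domain of the branch into `λ_j ∫ |φ|` over its image, which lies in
`I_j`. Summing over branches, `∫ |𝓛_l φ| ≤ (max_j λ_j^{1-l}) ∫ |φ|`. Since the `l`-th derivative
of `𝓛_0 h` is `𝓛_l h^{(l)}`, each term of `‖𝓛_0 h‖_r` is bounded with the factor
`λ_j^{1-l} ≤ Γ₀`, and the top one (`l = r ≥ 1`) also with `λ_j^{1-r} ≤ λ^{-(r-1)}`.
-/

open Set MeasureTheory Function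

section ConstantDerivative

variable {E : Type*} [NormedAddCommGroup E] [NormedSpace ℝ E] {g : ℝ → ℝ} {c : ℝ}

theorem injective_of_hasDerivAt_const (hc : c ≠ 0) (hg : ∀ x, HasDerivAt g c x) :
    Function.Injective g :=
  hc.lt_or_gt.elim (fun hneg => (strictAnti_of_hasDerivAt_neg hg fun _ => hneg).injective)
    (fun hpos => (strictMono_of_hasDerivAt_pos hg fun _ => hpos).injective)

theorem integrableOn_comp_iff_of_hasDerivAt_const (hc : c ≠ 0) (hg : ∀ x, HasDerivAt g c x)
    {s : Set ℝ} (hs : MeasurableSet s) (f : ℝ → E) :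
    IntegrableOn (fun x => f (g x)) s ↔ IntegrableOn f (g '' s) := by
  rw [integrableOn_image_iff_integrableOn_abs_deriv_smul hs (fun x _ => (hg x).hasDerivWithinAt)
    (injective_of_hasDerivAt_const hc hg).injOn]
  exact (integrable_smul_iff (abs_ne_zero.mpr hc) _).symm

theorem setIntegral_comp_of_hasDerivAt_const (hc : c ≠ 0) (hg : ∀ x, HasDerivAt g c x)
    {s : Set ℝ} (hs : MeasurableSet s) (f : ℝ → E) :
    ∫ x in s, f (g x) = |c|⁻¹ • ∫ y in g '' s, f y := by
  rw [integral_image_eq_integral_abs_deriv_smul hs (fun x _ => (hg x).hasDerivWithinAt)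
    (injective_of_hasDerivAt_const hc hg).injOn, integral_smul, smul_smul,
    inv_mul_cancel₀ (abs_ne_zero.mpr hc), one_smul]

end ConstantDerivative

section MarkovPartition

variable {N : ℕ} {I : Fin N → Set ℝ} {A : Fin N → Fin N → ℝ} {idx : ℝ → Fin N}

/-- The union of the intervals `I i` with `A j i = 1`: the paper's `f(I_j)`, on which the inverse
branch `g j` contributes to the transfer operator. -/
def branchDomain (I : Fin N → Set ℝ) (A : Fin N → Fin N → ℝ) (j : Fin N) : Set ℝ :=
  ⋃ i, ⋃ (_ : A j i = 1), I i

theorem measurableSet_branchDomain (hI : ∀ i, MeasurableSet (I i)) (j : Fin N) :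
    MeasurableSet (branchDomain I A j) :=
  MeasurableSet.iUnion fun i => MeasurableSet.iUnion fun _ => hI i

theorem branchDomain_subset_iUnion (j : Fin N) : branchDomain I A j ⊆ ⋃ i, I i :=
  iUnion_mono fun _ => iUnion_subset fun _ => subset_rfl

theorem image_branchDomain_subset {g : ℝ → ℝ} {j : Fin N}
    (hgI : ∀ i, A j i = 1 → ∀ x ∈ I i, g x ∈ I j) : g '' branchDomain I A j ⊆ I j := by
  rintro _ ⟨x, hx, rfl⟩
  obtain ⟨i, hx⟩ := mem_iUnion.mp hx
  obtain ⟨hA, hx⟩ := mem_iUnion.mp hx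
  exact hgI i hA x hx

theorem pairwise_disjoint_of_idx (hidx : ∀ i, ∀ x ∈ I i, idx x = i) :
    Pairwise (Disjoint on I) := fun i j hij =>
  disjoint_left.mpr fun x hxi hxj => hij ((hidx i x hxi).symm.trans (hidx j x hxj))

theorem transition_mul_eq_indicator {j : Fin N} (hA01 : ∀ i, A j i = 0 ∨ A j i = 1)
    (hidx : ∀ i, ∀ x ∈ I i, idx x = i) (f : ℝ → ℝ) {x : ℝ} (hx : x ∈ ⋃ i, I i) :
    A j (idx x) * f x = (branchDomain I A j).indicator f x := by
  obtain ⟨i, hxi⟩ := mem_iUnion.mp hx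
  rw [hidx i x hxi]
  rcases hA01 i with hA | hA
  · rw [hA, zero_mul, indicator_of_notMem]
    simp only [branchDomain, mem_iUnion, not_exists]
    intro i' hA' hxi'
    rw [← hidx i' x hxi', hidx i x hxi, hA] at hA'
    exact zero_ne_one hA'
  · have hxS : x ∈ branchDomain I A j := mem_iUnion₂.mpr ⟨i, hA, hxi⟩
    rw [hA, one_mul, indicator_of_mem hxS]

theorem setIntegral_transition_mul_abs_comp_le {lam : ℝ} (hlam : 0 < lam) {g : ℝ → ℝ}
    (hg : ∀ x, HasDerivAt g lam⁻¹ x) (hI : ∀ i, MeasurableSet (I i))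
    {j : Fin N} (hA01 : ∀ i, A j i = 0 ∨ A j i = 1) (hidx : ∀ i, ∀ x ∈ I i, idx x = i)
    (hgI : ∀ i, A j i = 1 → ∀ x ∈ I i, g x ∈ I j) {φ : ℝ → ℝ} (hφ : IntegrableOn φ (I j)) :
    IntegrableOn (fun x => A j (idx x) * |φ (g x)|) (⋃ i, I i) ∧
      ∫ x in ⋃ i, I i, A j (idx x) * |φ (g x)| ≤ lam * ∫ x in I j, |φ x| := by
  set S := branchDomain I A j
  have hS : MeasurableSet S := measurableSet_branchDomain hI j
  have hU : MeasurableSet (⋃ i, I i) := MeasurableSet.iUnion hI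
  have hc : lam⁻¹ ≠ 0 := inv_ne_zero hlam.ne'
  have hind : EqOn (fun x => A j (idx x) * |φ (g x)|) (S.indicator fun x => |φ (g x)|)
      (⋃ i, I i) := fun x hx => transition_mul_eq_indicator hA01 hidx (fun x => |φ (g x)|) hx
  have hint : IntegrableOn (fun x => |φ (g x)|) S :=
    (integrableOn_comp_iff_of_hasDerivAt_const hc hg hS _).mpr
      (hφ.mono_set (image_branchDomain_subset hgI)).abs
  refine ⟨(hint.integrable_indicator hS).integrableOn.congr_fun hind.symm hU, ?_⟩
  calc ∫ x in ⋃ i, I i, A j (idx x) * |φ (g x)|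
      = ∫ x in S, |φ (g x)| := by
        rw [setIntegral_congr_fun hU hind, setIntegral_indicator hS,
          inter_eq_right.mpr (branchDomain_subset_iUnion j)]
    _ = lam * ∫ y in g '' S, |φ y| := by
        rw [setIntegral_comp_of_hasDerivAt_const hc hg hS (fun y => |φ y|), abs_inv,
          abs_of_pos hlam, inv_inv, smul_eq_mul]
    _ ≤ lam * ∫ y in I j, |φ y| :=
        mul_le_mul_of_nonneg_left (setIntegral_mono_set hφ.abs
          (ae_of_all _ fun _ => abs_nonneg _) (image_branchDomain_subset hgI).eventuallyLE)
          hlam.le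

theorem setIntegral_abs_weighted_transfer_le {lam c : Fin N → ℝ} {K : ℝ} {g : Fin N → ℝ → ℝ}
    (hI : ∀ i, MeasurableSet (I i)) (hA01 : ∀ i j, A i j = 0 ∨ A i j = 1)
    (hidx : ∀ i, ∀ x ∈ I i, idx x = i) (hlam : ∀ j, 0 < lam j)
    (hg : ∀ j x, HasDerivAt (g j) (lam j)⁻¹ x) (hgI : ∀ i j, A j i = 1 → ∀ x ∈ I i, g j x ∈ I j)
    (hc : ∀ j, 0 ≤ c j) (hK : ∀ j, c j * lam j ≤ K) {φ : ℝ → ℝ}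
    (hφ : IntegrableOn φ (⋃ i, I i)) :
    ∫ x in ⋃ i, I i, |∑ j, c j * A j (idx x) * φ (g j x)| ≤ K * ∫ x in ⋃ i, I i, |φ x| := by
  have hφI : ∀ j, IntegrableOn φ (I j) := fun j => hφ.mono_set (subset_iUnion I j)
  have hbranch := fun j => setIntegral_transition_mul_abs_comp_le (hlam j) (hg j) hI (hA01 j) hidx
    (fun i => hgI i j) (hφI j)
  have hA : ∀ i j, 0 ≤ A i j := fun i j => (hA01 i j).elim (·.ge) (·.symm ▸ zero_le_one)
  have hpointwise : ∀ x, |∑ j, c j * A j (idx x) * φ (g j x)|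
      ≤ ∑ j, c j * (A j (idx x) * |φ (g j x)|) := fun x =>
    (Finset.abs_sum_le_sum_abs _ _).trans_eq <| Finset.sum_congr rfl fun j _ => by
      rw [abs_mul, abs_mul, abs_of_nonneg (hc j), abs_of_nonneg (hA _ _), mul_assoc]
  calc ∫ x in ⋃ i, I i, |∑ j, c j * A j (idx x) * φ (g j x)|
      ≤ ∫ x in ⋃ i, I i, ∑ j, c j * (A j (idx x) * |φ (g j x)|) :=
        integral_mono_of_nonneg (ae_of_all _ fun _ => abs_nonneg _)
          (integrable_finsetSum _ fun j _ => (hbranch j).1.const_mul (c j))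
          (ae_of_all _ hpointwise)
    _ = ∑ j, c j * ∫ x in ⋃ i, I i, A j (idx x) * |φ (g j x)| := by
        rw [integral_finsetSum _ fun j _ => (hbranch j).1.const_mul (c j)]
        exact Finset.sum_congr rfl fun j _ => integral_const_mul _ _
    _ ≤ ∑ j, K * ∫ x in I j, |φ x| := Finset.sum_le_sum fun j _ => calc
        c j * ∫ x in ⋃ i, I i, A j (idx x) * |φ (g j x)|
            ≤ c j * lam j * ∫ x in I j, |φ x| := by
              rw [mul_assoc]; exact mul_le_mul_of_nonneg_left (hbranch j).2 (hc j)
        _ ≤ K * ∫ x in I j, |φ x| :=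
              mul_le_mul_of_nonneg_right (hK j) (setIntegral_nonneg (hI j) fun _ _ => abs_nonneg _)
    _ = K * ∫ x in ⋃ i, I i, |φ x| := by
        rw [← Finset.mul_sum, integral_iUnion_fintype hI (pairwise_disjoint_of_idx hidx)
          fun j => (hφI j).abs]

end MarkovPartition

theorem zpow_neg_natCast_mul_self_le_self {a : ℝ} (ha : 1 ≤ a) (l : ℕ) : a ^ (-(l : ℤ)) * a ≤ a :=
  mul_le_of_le_one_left (zero_le_one.trans ha) (zpow_le_one_of_nonpos₀ ha (by omega))

theorem zpow_neg_natCast_mul_self {a : ℝ} (ha : a ≠ 0) {r : ℕ} (hr : 1 ≤ r) :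
    a ^ (-(r : ℤ)) * a = (a ^ (r - 1))⁻¹ := by
  rw [← zpow_add_one₀ ha, ← zpow_natCast, ← zpow_neg]
  congr 1
  omega

theorem sum_range_succ_le_mul_add_mul {a b : ℕ → ℝ} {r : ℕ} {Γ κ : ℝ} (hb : ∀ l, 0 ≤ b l)
    (hκ : 0 ≤ κ) (hΓ : ∀ l < r, a l ≤ Γ * b l) (har : a r ≤ κ * b r) :
    ∑ l ∈ Finset.range (r + 1), a l
      ≤ κ * ∑ l ∈ Finset.range (r + 1), b l + Γ * ∑ l ∈ Finset.range r, b l := by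
  have hlast : κ * b r ≤ κ * ∑ l ∈ Finset.range (r + 1), b l :=
    mul_le_mul_of_nonneg_left
      (Finset.single_le_sum (fun l _ => hb l) (Finset.self_mem_range_succ r)) hκ
  have hinit : ∑ l ∈ Finset.range r, a l ≤ Γ * ∑ l ∈ Finset.range r, b l := by
    rw [Finset.mul_sum]
    exact Finset.sum_le_sum fun l hl => hΓ l (Finset.mem_range.mp hl)
  rw [Finset.sum_range_succ]
  linarith

theorem stmt2_general
    (N : ℕ) (I : Fin N → Set ℝ)
    (hIopen : ∀ j, ∃ a b : ℝ, a < b ∧ I j = Set.Ioo a b)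
    (lam : Fin N → ℝ) (lam0 : ℝ) (hlam0 : 1 < lam0)
    (hlam : ∀ j, lam0 ≤ lam j)
    (Γ0 : ℝ) (hΓ0 : ∀ j, lam j ≤ Γ0)
    (A : Fin N → Fin N → ℝ) (hA01 : ∀ i j, A i j = 0 ∨ A i j = 1)
    (g : Fin N → ℝ → ℝ)
    (hg : ∀ j x, HasDerivAt (g j) (lam j)⁻¹ x)
    (hgI : ∀ i j, A j i = 1 → ∀ x ∈ I i, g j x ∈ I j)
    (idx : ℝ → Fin N) (hidx : ∀ j, ∀ x ∈ I j, idx x = j)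
    (L : ℕ → (ℝ → ℝ) → (ℝ → ℝ))
    (hL : ∀ m φ x, L m φ x = ∑ j, (lam j) ^ (-(m : ℤ)) * A j (idx x) * φ (g j x))
    (r : ℕ) (hr : 1 ≤ r)
    (dh : ℕ → ℝ → ℝ)
    (U : Set ℝ) (hU : U = ⋃ j, I j)
    (hint : ∀ l ≤ r, IntegrableOn (dh l) U) :
    (∑ l ∈ Finset.range (r + 1), ∫ x in U, |L l (dh l) x|)
        ≤ Γ0 * ∑ l ∈ Finset.range (r + 1), ∫ x in U, |dh l x| ∧
      (∑ l ∈ Finset.range (r + 1), ∫ x in U, |L l (dh l) x|)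
        ≤ (lam0 ^ (r - 1))⁻¹ * (∑ l ∈ Finset.range (r + 1), ∫ x in U, |dh l x|)
          + Γ0 * (∑ l ∈ Finset.range r, ∫ x in U, |dh l x|) := by
  subst hU
  have hI : ∀ j, MeasurableSet (I j) := fun j => by
    obtain ⟨a, b, -, hIj⟩ := hIopen j
    exact hIj ▸ measurableSet_Ioo
  have hlam1 : ∀ j, 1 ≤ lam j := fun j => hlam0.le.trans (hlam j)
  have hL_le : ∀ l ≤ r, ∀ K, (∀ j, lam j ^ (-(l : ℤ)) * lam j ≤ K) →
      ∫ x in ⋃ j, I j, |L l (dh l) x| ≤ K * ∫ x in ⋃ j, I j, |dh l x| := fun l hl K hK => by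
    simp only [hL]
    exact setIntegral_abs_weighted_transfer_le hI hA01 hidx
      (fun j => zero_lt_one.trans_le (hlam1 j)) hg hgI
      (fun j => zpow_nonneg (zero_le_one.trans (hlam1 j)) _) hK (hint l hl)
  have hΓ : ∀ l ≤ r, ∫ x in ⋃ j, I j, |L l (dh l) x| ≤ Γ0 * ∫ x in ⋃ j, I j, |dh l x| :=
    fun l hl => hL_le l hl Γ0 fun j => (zpow_neg_natCast_mul_self_le_self (hlam1 j) l).trans (hΓ0 j)
  have hlast : ∫ x in ⋃ j, I j, |L r (dh r) x| ≤ (lam0 ^ (r - 1))⁻¹ * ∫ x in ⋃ j, I j, |dh r x| :=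
    hL_le r le_rfl _ fun j => by
      rw [zpow_neg_natCast_mul_self (zero_lt_one.trans_le (hlam1 j)).ne' hr]
      exact inv_anti₀ (by positivity) (pow_le_pow_left₀ (by positivity) (hlam j) _)
  refine ⟨?_, sum_range_succ_le_mul_add_mul (fun l => setIntegral_nonneg (MeasurableSet.iUnion hI)
    fun _ _ => abs_nonneg _) (by positivity) (fun l hl => hΓ l hl.le) hlast⟩
  rw [Finset.mul_sum]
  exact Finset.sum_le_sum fun l hl => hΓ l (Finset.mem_range_succ_iff.mp hl)

/-- Lasota–Yorke inequalities for `𝓛_0` acting on `W^{r,1}`, `r ≥ 1`, with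
`Γ₀ = ‖f'‖_∞` (an upper bound for the branch slopes):
`‖𝓛_0 h‖_r ≤ Γ₀ ‖h‖_r` and `‖𝓛_0 h‖_r ≤ λ^{-(r-1)} ‖h‖_r + Γ₀ ‖h‖_{r-1}`.
The `W^{r,1}` norm of `𝓛_0 h` is expressed via its piecewise derivatives
`(𝓛_0 h)^{(l)} = 𝓛_l h^{(l)}`. -/
theorem stmt2
    (N : ℕ) (I : Fin N → Set ℝ)
    (hIopen : ∀ j, ∃ a b : ℝ, a < b ∧ I j = Set.Ioo a b)
    (lam : Fin N → ℝ) (lam0 : ℝ) (hlam0 : 1 < lam0)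
    (hlam : ∀ j, lam0 ≤ lam j)
    (Γ0 : ℝ) (hΓ0 : ∀ j, lam j ≤ Γ0)
    (A : Fin N → Fin N → ℝ) (hA01 : ∀ i j, A i j = 0 ∨ A i j = 1)
    (g : Fin N → ℝ → ℝ)
    (hg : ∀ j x, HasDerivAt (g j) (lam j)⁻¹ x)
    (hgI : ∀ i j, A j i = 1 → ∀ x ∈ I i, g j x ∈ I j)
    (idx : ℝ → Fin N) (hidx : ∀ j, ∀ x ∈ I j, idx x = j)
    (L : ℕ → (ℝ → ℝ) → (ℝ → ℝ))
    (hL : ∀ m φ x, L m φ x = ∑ j, (lam j) ^ (-(m : ℤ)) * A j (idx x) * φ (g j x))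
    (r : ℕ) (hr : 1 ≤ r) (h : ℝ → ℝ)
    (dh : ℕ → ℝ → ℝ) (hdh0 : dh 0 = h)
    (hdh : ∀ l < r, ∀ j, ∀ x ∈ I j, HasDerivAt (dh l) (dh (l + 1) x) x)
    (U : Set ℝ) (hU : U = ⋃ j, I j)
    (hint : ∀ l ≤ r, IntegrableOn (dh l) U) :
    (∑ l ∈ Finset.range (r + 1), ∫ x in U, |L l (dh l) x|)
        ≤ Γ0 * ∑ l ∈ Finset.range (r + 1), ∫ x in U, |dh l x| ∧
      (∑ l ∈ Finset.range (r + 1), ∫ x in U, |L l (dh l) x|)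
        ≤ (lam0 ^ (r - 1))⁻¹ * (∑ l ∈ Finset.range (r + 1), ∫ x in U, |dh l x|)
          + Γ0 * (∑ l ∈ Finset.range r, ∫ x in U, |dh l x|) :=
  stmt2_general N I hIopen lam lam0 hlam0 hlam Γ0 hΓ0 A hA01 g hg hgI idx hidx L hL r hr dh U hU
    hint
end

section
/- Let f be a C² full branch expanding map of [0,1] with f' ≥ λ > 1 which is an N-covering (N branches). Then the transfer operator 𝓛₀ h = Σ_{y∈f^{-1}(x)} h(y), acting on C¹([0,1]), has spectrum contained in {N} ∪ {z ∈ ℂ : |z| ≤ 1}. Moreover any eigenfunction of 𝓛₀ in C¹ with eigenvalue ν, |ν| > 1, is constant, hence ν = N. -/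
open Set MeasureTheory intervalIntegral Filter Topology

/-!
Differentiating `ν h = Σⱼ h ∘ gⱼ` gives `ν h' = Σⱼ gⱼ' · (h' ∘ gⱼ) = 𝓛₁ h'`. The inverse branches
`gⱼ` take values in the intervals of a partition of `[0,1]`, so the substitution `u = gⱼ x` shows
that `𝓛₁` does not increase the `L¹` norm: `|ν| ‖h'‖₁ ≤ ‖h'‖₁`. As `|ν| > 1`, this forces
`h' = 0`, so `h` is constant, and then `𝓛₀ h = N h` gives `ν = N`.
-/
theorem integral_le_integral_of_mem_Icc {ψ : ℝ → ℝ} {c d x y : ℝ}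
    (hψ : IntervalIntegrable ψ volume c d) (hψ0 : ∀ t, 0 ≤ ψ t)
    (hx : x ∈ Icc c d) (hy : y ∈ Icc c d) :
    ∫ t in x..y, ψ t ≤ ∫ t in c..d, ψ t := by
  rcases le_total x y with hxy | hyx
  · exact integral_mono_interval hx.1 hxy hy.2 (ae_of_all _ hψ0) hψ
  · have hyx' : 0 ≤ ∫ t in y..x, ψ t := integral_nonneg hyx fun t _ => hψ0 t
    have hcd : 0 ≤ ∫ t in c..d, ψ t := integral_nonneg (hx.1.trans hx.2) fun t _ => hψ0 t
    rw [integral_symm]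
    linarith

theorem integral_comp_mul_deriv_le {g φ ψ : ℝ → ℝ} {a b c d : ℝ}
    (hg : ∀ x ∈ uIcc a b, HasDerivAt g (φ x) x) (hφ : ContinuousOn φ (uIcc a b))
    (hmaps : MapsTo g (uIcc a b) (Icc c d)) (hψ : Continuous ψ) (hψ0 : ∀ t, 0 ≤ ψ t) :
    ∫ x in a..b, ψ (g x) * φ x ≤ ∫ t in c..d, ψ t := by
  have hsubst := integral_comp_mul_deriv hg hφ hψ
  simp only [Function.comp_apply] at hsubst
  rw [hsubst]
  exact integral_le_integral_of_mem_Icc (hψ.intervalIntegrable c d) hψ0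
    (hmaps left_mem_uIcc) (hmaps right_mem_uIcc)

theorem sum_integral_fin_adjacent_intervals {N : ℕ} (p : Fin (N + 1) → ℝ) {ψ : ℝ → ℝ}
    (hψ : ∀ a b, IntervalIntegrable ψ volume a b) :
    ∑ j : Fin N, ∫ t in p j.castSucc..p j.succ, ψ t = ∫ t in p 0..p (Fin.last N), ψ t := by
  induction N with
  | zero => simp
  | succ N ih =>
    rw [Fin.sum_univ_castSucc]
    have ih' := ih (p ∘ Fin.castSucc)
    simp only [Function.comp_apply, Fin.castSucc_zero] at ih'
    simp only [Fin.succ_castSucc, ih', Fin.succ_last]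
    exact integral_add_adjacent_intervals (hψ _ _) (hψ _ _)

theorem norm_mul_norm_deriv_le_sum {N : ℕ} {g φ : Fin N → ℝ → ℝ} {h h' : ℝ → ℂ} {ν : ℂ}
    {x : ℝ} (hh : ∀ y, HasDerivAt h (h' y) y) (hg : ∀ j, HasDerivAt (g j) (φ j x) x)
    (hφ : ∀ j, 0 ≤ φ j x) (heig : ∀ᶠ y in 𝓝 x, ∑ j, h (g j y) = ν * h y) :
    ‖ν‖ * ‖h' x‖ ≤ ∑ j, ‖h' (g j x)‖ * φ j x := by
  have hsum : HasDerivAt (fun y => ∑ j, h (g j y)) (∑ j, φ j x • h' (g j x)) x :=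
    HasDerivAt.fun_sum fun j _ => (hh (g j x)).scomp x (hg j)
  have hderiv : ν * h' x = ∑ j, φ j x • h' (g j x) :=
    ((hh x).const_mul ν).unique (hsum.congr_of_eventuallyEq (heig.mono fun _ hy => hy.symm))
  calc ‖ν‖ * ‖h' x‖ = ‖∑ j, φ j x • h' (g j x)‖ := by rw [← hderiv, norm_mul]
    _ ≤ ∑ j, ‖φ j x • h' (g j x)‖ := norm_sum_le _ _
    _ = ∑ j, ‖h' (g j x)‖ * φ j x := by
      simp only [norm_smul, Real.norm_of_nonneg (hφ _), mul_comm]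

theorem integral_eq_zero_of_forall_mul_integral_le {ψ : ℝ → ℝ} {u v c : ℝ} (huv : u ≤ v)
    (hψ : Continuous ψ) (hψ0 : ∀ t, 0 ≤ ψ t) (hc : 1 < c)
    (H : ∀ a b, u < a → a < b → b < v → c * ∫ t in a..b, ψ t ≤ ∫ t in u..v, ψ t) :
    ∫ t in u..v, ψ t = 0 := by
  have hint : ∀ a b, IntervalIntegrable ψ volume a b := hψ.intervalIntegrable
  have hinner : Tendsto (fun ε => c * ∫ t in u + ε..v - ε, ψ t) (𝓝[>] 0)
      (𝓝 (c * ∫ t in u..v, ψ t)) := by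
    have hcont : Continuous fun ε => c * ∫ t in u + ε..v - ε, ψ t := by
      have hG := continuous_primitive hint u
      have hsplit : (fun ε => c * ∫ t in u + ε..v - ε, ψ t) =
          fun ε => c * ((∫ t in u..v - ε, ψ t) - ∫ t in u..u + ε, ψ t) := by
        funext ε
        rw [integral_interval_sub_left (hint _ _) (hint _ _)]
      rw [hsplit]
      exact continuous_const.mul ((hG.comp (continuous_const.sub continuous_id)).sub
        (hG.comp (continuous_const.add continuous_id)))
    simpa using (hcont.tendsto 0).mono_left nhdsWithin_le_nhds
  have hle : c * ∫ t in u..v, ψ t ≤ ∫ t in u..v, ψ t := by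
    rcases huv.eq_or_lt with rfl | huv
    · simp
    refine le_of_tendsto hinner ?_
    filter_upwards [Ioo_mem_nhdsGT (half_pos (sub_pos.2 huv))] with ε hε
    exact H _ _ (by linarith [hε.1]) (by linarith [hε.2]) (by linarith [hε.1])
  have hnonneg : 0 ≤ ∫ t in u..v, ψ t := integral_nonneg huv fun t _ => hψ0 t
  nlinarith

theorem eq_of_integral_norm_deriv_eq_zero {E : Type*} [NormedAddCommGroup E] [NormedSpace ℝ E]
    [CompleteSpace E] {h h' : ℝ → E} {a b : ℝ} (hh : ∀ x, HasDerivAt h (h' x) x)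
    (hh' : Continuous h') (hI : ∫ t in a..b, ‖h' t‖ = 0) {x : ℝ} (hx : x ∈ Icc a b) : h x = h a := by
  have hle : ‖h x - h a‖ ≤ 0 :=
    calc ‖h x - h a‖ = ‖∫ t in a..x, h' t‖ := by
          rw [integral_eq_sub_of_hasDerivAt (fun y _ => hh y) (hh'.intervalIntegrable a x)]
      _ ≤ ∫ t in a..x, ‖h' t‖ := norm_integral_le_integral_norm hx.1
      _ ≤ ∫ t in a..b, ‖h' t‖ :=
          integral_mono_interval le_rfl hx.1 hx.2 (ae_of_all _ fun t => norm_nonneg _)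
            (hh'.norm.intervalIntegrable a b)
      _ = 0 := hI
  exact sub_eq_zero.1 (norm_le_zero_iff.1 hle)

theorem mul_integral_norm_deriv_le {N : ℕ} {p : Fin (N + 1) → ℝ} {g φ : Fin N → ℝ → ℝ}
    {h h' : ℝ → ℂ} {ν : ℂ} {U : Set ℝ} (hU : IsOpen U)
    (hg : ∀ j, ∀ x ∈ U, HasDerivAt (g j) (φ j x) x) (hφ : ∀ j, ContinuousOn (φ j) U)
    (hφ0 : ∀ j, ∀ x ∈ U, 0 ≤ φ j x) (hmaps : ∀ j, MapsTo (g j) U (Icc (p j.castSucc) (p j.succ)))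
    (hh : ∀ y, HasDerivAt h (h' y) y) (hh' : Continuous h')
    (heig : ∀ y ∈ U, ∑ j, h (g j y) = ν * h y) {a b : ℝ} (hab : a ≤ b) (habU : Icc a b ⊆ U) :
    ‖ν‖ * ∫ x in a..b, ‖h' x‖ ≤ ∫ x in p 0..p (Fin.last N), ‖h' x‖ := by
  have hsub : uIcc a b ⊆ U := uIcc_of_le hab ▸ habU
  have hterm : ∀ j, ContinuousOn (fun x => ‖h' (g j x)‖ * φ j x) (uIcc a b) := fun j =>
    (hh'.norm.comp_continuousOn fun x hx => (hg j x (hsub hx)).continuousAt.continuousWithinAt).mul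
      ((hφ j).mono hsub)
  calc ‖ν‖ * ∫ x in a..b, ‖h' x‖ = ∫ x in a..b, ‖ν‖ * ‖h' x‖ :=
        (intervalIntegral.integral_const_mul _ _).symm
    _ ≤ ∫ x in a..b, ∑ j, ‖h' (g j x)‖ * φ j x := by
      refine integral_mono_on hab ((continuous_const.mul hh'.norm).intervalIntegrable a b)
        (ContinuousOn.intervalIntegrable (continuousOn_finsetSum _ fun j _ => hterm j))
        fun x hx => ?_
      exact norm_mul_norm_deriv_le_sum hh (fun j => hg j x (habU hx)) (fun j => hφ0 j x (habU hx))
        (eventually_of_mem (hU.mem_nhds (habU hx)) heig)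
    _ = ∑ j, ∫ x in a..b, ‖h' (g j x)‖ * φ j x :=
      integral_finsetSum fun j _ => (hterm j).intervalIntegrable
    _ ≤ ∑ j, ∫ t in p j.castSucc..p j.succ, ‖h' t‖ := Finset.sum_le_sum fun j _ =>
      integral_comp_mul_deriv_le (fun x hx => hg j x (hsub hx)) ((hφ j).mono hsub)
        ((hmaps j).mono_left hsub) hh'.norm fun t => norm_nonneg _
    _ = ∫ t in p 0..p (Fin.last N), ‖h' t‖ :=
      sum_integral_fin_adjacent_intervals p hh'.norm.intervalIntegrable

theorem stmt7_general
    (N : ℕ) (p : Fin (N + 1) → ℝ) (hp : StrictMono p)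
    (hp0 : p 0 = 0) (hpN : p (Fin.last N) = 1)
    (fd : ℝ → ℝ) (lam0 : ℝ) (hlam0 : 1 < lam0)
    (hfdc : ∀ j : Fin N, ContinuousOn fd (Set.Ioo (p j.castSucc) (p j.succ)))
    (hexp : ∀ j : Fin N, ∀ x ∈ Set.Ioo (p j.castSucc) (p j.succ), lam0 ≤ fd x)
    (g : Fin N → ℝ → ℝ)
    (hgmem : ∀ j : Fin N, ∀ x ∈ Set.Ioo (0:ℝ) 1, g j x ∈ Set.Ioo (p j.castSucc) (p j.succ))
    (hgd : ∀ j : Fin N, ∀ x ∈ Set.Ioo (0:ℝ) 1, HasDerivAt (g j) (((fd (g j x) : ℝ) : ℝ))⁻¹ x)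
    (L0 : (ℝ → ℂ) → ℝ → ℂ)
    (hL0 : ∀ φ x, L0 φ x = ∑ j, φ (g j x))
    (ν : ℂ) (hν : 1 < ‖ν‖)
    (h h' : ℝ → ℂ)
    (hh : ∀ x, HasDerivAt h (h' x) x) (hh' : Continuous h')
    (heig : ∀ x ∈ Set.Ioo (0:ℝ) 1, L0 h x = ν * h x)
    (hne : ∃ x ∈ Set.Icc (0:ℝ) 1, h x ≠ 0) :
    (∀ x ∈ Set.Icc (0:ℝ) 1, ∀ y ∈ Set.Icc (0:ℝ) 1, h x = h y) ∧ ν = (N : ℂ) := by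
  have hfd_pos : ∀ j, ∀ x ∈ Ioo (0:ℝ) 1, 0 < fd (g j x) := fun j x hx =>
    (zero_lt_one.trans hlam0).trans_le (hexp j _ (hgmem j x hx))
  have hφ : ∀ j, ContinuousOn (fun x => (fd (g j x))⁻¹) (Ioo 0 1) := fun j =>
    ((hfdc j).comp (fun x hx => (hgd j x hx).continuousAt.continuousWithinAt) (hgmem j)).inv₀
      fun x hx => (hfd_pos j x hx).ne'
  have hmaps : ∀ j, MapsTo (g j) (Ioo 0 1) (Icc (p j.castSucc) (p j.succ)) := fun j x hx =>
    Ioo_subset_Icc_self (hgmem j x hx)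
  have hbranch : ∀ j : Fin N, Icc (p j.castSucc) (p j.succ) ⊆ Icc 0 1 := fun j =>
    Icc_subset_Icc (hp0 ▸ hp.monotone (Fin.zero_le _)) (hpN ▸ hp.monotone (Fin.le_last _))
  have heig' : ∀ y ∈ Ioo (0:ℝ) 1, ∑ j, h (g j y) = ν * h y := fun y hy =>
    (hL0 h y).symm.trans (heig y hy)
  have hI : ∫ t in (0:ℝ)..1, ‖h' t‖ = 0 := by
    refine integral_eq_zero_of_forall_mul_integral_le zero_le_one hh'.norm
      (fun t => norm_nonneg _) hν fun a b ha hab hb => ?_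
    calc _ ≤ _ := mul_integral_norm_deriv_le isOpen_Ioo hgd hφ
          (fun j x hx => (inv_pos.2 (hfd_pos j x hx)).le) hmaps hh hh' heig' hab.le
          (Icc_subset_Ioo ha hb)
      _ = _ := by rw [hp0, hpN]
  have hconst : ∀ x ∈ Icc (0:ℝ) 1, h x = h 0 := fun x hx =>
    eq_of_integral_norm_deriv_eq_zero hh hh' hI hx
  refine ⟨fun x hx y hy => (hconst x hx).trans (hconst y hy).symm, ?_⟩
  obtain ⟨x₀, hx₀, hx₀ne⟩ := hne
  have hmid : (1 / 2 : ℝ) ∈ Ioo 0 1 := by norm_num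
  have hsum : ∑ j, h (g j (1 / 2)) = N * h 0 := by
    rw [Finset.sum_congr rfl fun j _ => hconst _ (hbranch j (hmaps j hmid))]
    simp
  have hν_mul : ν * h 0 = N * h 0 := by
    rw [← hsum, heig' _ hmid, hconst _ (Ioo_subset_Icc_self hmid)]
  exact mul_right_cancel₀ (hconst x₀ hx₀ ▸ hx₀ne) hν_mul

/-- For a `C²` full branch expanding `N`-covering map `f` of `[0,1]`
(`f' ≥ λ > 1`), any `C¹` eigenfunction of `𝓛₀ h(x) = Σ_{y∈f⁻¹(x)} h(y)` with eigenvalue `ν`,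
`|ν| > 1`, is constant, and then `ν = N`; hence the spectrum of `𝓛₀` on `C¹` outside the closed
unit disk reduces to `{N}`. -/
theorem stmt7
    (N : ℕ) (hN : 0 < N) (p : Fin (N + 1) → ℝ) (hp : StrictMono p)
    (hp0 : p 0 = 0) (hpN : p (Fin.last N) = 1)
    (f fd : ℝ → ℝ) (lam0 : ℝ) (hlam0 : 1 < lam0)
    (hfd : ∀ j : Fin N, ∀ x ∈ Set.Ioo (p j.castSucc) (p j.succ), HasDerivAt f (fd x) x)
    (hfdc : ∀ j : Fin N, ContinuousOn fd (Set.Ioo (p j.castSucc) (p j.succ)))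
    (hexp : ∀ j : Fin N, ∀ x ∈ Set.Ioo (p j.castSucc) (p j.succ), lam0 ≤ fd x)
    (g : Fin N → ℝ → ℝ)
    (hgmem : ∀ j : Fin N, ∀ x ∈ Set.Ioo (0:ℝ) 1, g j x ∈ Set.Ioo (p j.castSucc) (p j.succ))
    (hgf : ∀ j : Fin N, ∀ x ∈ Set.Ioo (0:ℝ) 1, f (g j x) = x)
    (hgd : ∀ j : Fin N, ∀ x ∈ Set.Ioo (0:ℝ) 1, HasDerivAt (g j) (((fd (g j x) : ℝ) : ℝ))⁻¹ x)
    (L0 : (ℝ → ℂ) → ℝ → ℂ)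
    (hL0 : ∀ φ x, L0 φ x = ∑ j, φ (g j x))
    (ν : ℂ) (hν : 1 < ‖ν‖)
    (h h' : ℝ → ℂ)
    (hh : ∀ x, HasDerivAt h (h' x) x) (hh' : Continuous h')
    (heig : ∀ x ∈ Set.Ioo (0:ℝ) 1, L0 h x = ν * h x)
    (hne : ∃ x ∈ Set.Icc (0:ℝ) 1, h x ≠ 0) :
    (∀ x ∈ Set.Icc (0:ℝ) 1, ∀ y ∈ Set.Icc (0:ℝ) 1, h x = h y) ∧ ν = (N : ℂ) :=
  stmt7_general N p hp hp0 hpN fd lam0 hlam0 hfdc hexp g hgmem hgd L0 hL0 ν hν h h' hh hh' heig hne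
end

section
/- Let f be a C² full branch expanding map of [0,1] with f' ≥ λ > 1, and set τ = λ^{-1} + ∫₀¹ |(1/f'(y))'| dy. If ν ∈ ℂ with |ν| > λ^{-1} is an eigenvalue of 𝓛₁ acting on W^{1,1} with eigenfunction of zero mean, then |ν| ≤ τ. In particular σ(𝓛₁) \ {1} ⊆ {z : |z| ≤ τ} modulo the essential spectrum contained in {|z| ≤ λ^{-1}}. -/
/-!
Differentiating `𝓛₁ h = ν h` along the inverse branches `gⱼ`, whose derivatives are `1/f' ∘ gⱼ`,
gives `ν h' = 𝓛₁ ((h/f')')` with `(h/f')' = h'/f' + h · (1/f')'`. The operator `𝓛₁` does not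
increase the `L¹` norm of nonnegative functions (change of variables on each branch, the branch
images being disjoint), so with `1/f' ≤ λ⁻¹` we get
`|ν| ‖h'‖₁ ≤ λ⁻¹ ‖h'‖₁ + ‖h‖_∞ ‖(1/f')'‖₁`. Zero mean gives `‖h‖_∞ ≤ ‖h'‖₁`, and `h ≠ 0` forces
`‖h'‖₁ > 0`, so we may divide by `‖h'‖₁`.
-/

open Set MeasureTheory Function

section MeanZero

variable {E : Type*} [NormedAddCommGroup E] [NormedSpace ℝ E] [CompleteSpace E]
  {a b : ℝ} {h h' : ℝ → E}

theorem norm_sub_le_integral_norm_deriv (hC : ContinuousOn h (Icc a b))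
    (hd : ∀ x ∈ Ioo a b, HasDerivAt h (h' x) x) (hint : IntegrableOn h' (Ioo a b))
    {x y : ℝ} (hx : x ∈ Icc a b) (hy : y ∈ Icc a b) :
    ‖h y - h x‖ ≤ ∫ t in Ioo a b, ‖h' t‖ := by
  wlog hxy : x ≤ y generalizing x y
  · rw [norm_sub_rev]
    exact this hy hx (le_of_not_ge hxy)
  have hsub : Icc x y ⊆ Icc a b := Icc_subset_Icc hx.1 hy.2
  have hint' : IntegrableOn h' (Icc a b) :=
    (integrableOn_Icc_iff_integrableOn_Ioo (f := h')).2 hint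
  rw [← intervalIntegral.integral_eq_sub_of_hasDerivAt_of_le hxy (hC.mono hsub)
    (fun t ht => hd t (Ioo_subset_Ioo hx.1 hy.2 ht))
    ((intervalIntegrable_iff_integrableOn_Icc_of_le hxy).2 (hint'.mono_set hsub)),
    ← integral_Icc_eq_integral_Ioo]
  calc ‖∫ t in x..y, h' t‖ ≤ ∫ t in x..y, ‖h' t‖ :=
        intervalIntegral.norm_integral_le_integral_norm hxy
    _ = ∫ t in Ioc x y, ‖h' t‖ := intervalIntegral.integral_of_le hxy
    _ ≤ ∫ t in Icc a b, ‖h' t‖ :=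
        setIntegral_mono_set hint'.norm (ae_of_all _ fun _ => norm_nonneg _)
          (Ioc_subset_Icc_self.trans hsub).eventuallyLE

theorem norm_le_integral_norm_deriv_of_integral_eq_zero (hab : a < b)
    (hC : ContinuousOn h (Icc a b)) (hd : ∀ x ∈ Ioo a b, HasDerivAt h (h' x) x)
    (hint : IntegrableOn h' (Ioo a b)) (hmean : ∫ x in a..b, h x = 0)
    {y : ℝ} (hy : y ∈ Icc a b) :
    ‖h y‖ ≤ ∫ t in Ioo a b, ‖h' t‖ := by
  have hba : 0 < b - a := sub_pos.2 hab
  have hshift : ∫ x in a..b, (h y - h x) = (b - a) • h y := by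
    rw [intervalIntegral.integral_sub intervalIntegrable_const
      (hC.intervalIntegrable_of_Icc hab.le), hmean, intervalIntegral.integral_const, sub_zero]
  have hbound := intervalIntegral.norm_integral_le_of_norm_le_const fun x hx =>
    norm_sub_le_integral_norm_deriv hC hd hint
      (Ioc_subset_Icc_self (uIoc_of_le hab.le ▸ hx)) hy
  rw [hshift, norm_smul, Real.norm_of_nonneg hba.le, abs_of_pos hba, mul_comm] at hbound
  exact le_of_mul_le_mul_right hbound hba

end MeanZero

/-- With `g j` the inverse branches of `f` and `w = 1/f'`, `transfer g w` is `𝓛₁`. -/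
def transfer {ι E : Type*} [Fintype ι] [AddCommMonoid E] [Module ℝ E]
    (g : ι → ℝ → ℝ) (w : ℝ → ℝ) (h : ℝ → E) (x : ℝ) : E :=
  ∑ j, w (g j x) • h (g j x)

theorem hasDerivAt_transfer {ι E : Type*} [Fintype ι] [NormedAddCommGroup E] [NormedSpace ℝ E]
    {g : ι → ℝ → ℝ} {w : ℝ → ℝ} {h k : ℝ → E} {x : ℝ}
    (hg : ∀ j, HasDerivAt (g j) (w (g j x)) x)
    (hk : ∀ j, HasDerivAt (fun y => w y • h y) (k (g j x)) (g j x)) :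
    HasDerivAt (transfer g w h) (transfer g w k x) x :=
  HasDerivAt.fun_sum fun j _ => (hk j).scomp x (hg j)

structure IsBranchSystem {ι : Type*} (S : Set ℝ) (I : ι → Set ℝ) (g : ι → ℝ → ℝ) (w : ℝ → ℝ) :
    Prop where
  measurableSet : MeasurableSet S
  measurableSet_piece : ∀ j, MeasurableSet (I j)
  pairwise_disjoint : Pairwise (Disjoint on I)
  piece_subset : ∀ j, I j ⊆ S
  mapsTo : ∀ j, MapsTo (g j) S (I j)
  injOn : ∀ j, InjOn (g j) S
  hasDerivAt : ∀ j, ∀ x ∈ S, HasDerivAt (g j) (w (g j x)) x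
  nonneg : ∀ j, ∀ y ∈ I j, 0 ≤ w y

namespace IsBranchSystem

variable {ι E : Type*} [NormedAddCommGroup E] [NormedSpace ℝ E]
  {S : Set ℝ} {I : ι → Set ℝ} {g : ι → ℝ → ℝ} {w : ℝ → ℝ}

theorem weight_nonneg (hB : IsBranchSystem S I g w) (j : ι) {x : ℝ} (hx : x ∈ S) : 0 ≤ w (g j x) :=
  hB.nonneg j _ (hB.mapsTo j hx)

theorem image_subset (hB : IsBranchSystem S I g w) (j : ι) : g j '' S ⊆ S :=
  (hB.mapsTo j).image_subset.trans (hB.piece_subset j)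

theorem integrableOn_branch (hB : IsBranchSystem S I g w) (j : ι) {u : ℝ → E}
    (hu : IntegrableOn u S) : IntegrableOn (fun x => w (g j x) • u (g j x)) S := by
  refine ((integrableOn_image_iff_integrableOn_abs_deriv_smul hB.measurableSet
    (fun x hx => (hB.hasDerivAt j x hx).hasDerivWithinAt) (hB.injOn j) u).1
    (hu.mono_set (hB.image_subset j))).congr_fun (fun x hx => ?_) hB.measurableSet
  dsimp only
  rw [abs_of_nonneg (hB.weight_nonneg j hx)]

theorem setIntegral_branch [CompleteSpace E] (hB : IsBranchSystem S I g w) (j : ι)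
    (u : ℝ → E) : ∫ x in S, w (g j x) • u (g j x) = ∫ y in g j '' S, u y := by
  rw [integral_image_eq_integral_abs_deriv_smul hB.measurableSet
    (fun x hx => (hB.hasDerivAt j x hx).hasDerivWithinAt) (hB.injOn j)]
  refine setIntegral_congr_fun hB.measurableSet fun x hx => ?_
  rw [abs_of_nonneg (hB.weight_nonneg j hx)]

theorem integrableOn_transfer [Fintype ι] (hB : IsBranchSystem S I g w) {u : ℝ → E}
    (hu : IntegrableOn u S) : IntegrableOn (transfer g w u) S :=
  integrable_finsetSum _ fun j _ => hB.integrableOn_branch j hu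

theorem setIntegral_transfer_le [Fintype ι] (hB : IsBranchSystem S I g w) {u : ℝ → ℝ}
    (hu : IntegrableOn u S) (hu0 : ∀ y, 0 ≤ u y) :
    ∫ x in S, transfer g w u x ≤ ∫ y in S, u y := by
  have hu0' {μ : Measure ℝ} : 0 ≤ᵐ[μ] u := ae_of_all _ hu0
  calc ∫ x in S, transfer g w u x = ∑ j, ∫ y in g j '' S, u y := by
        unfold transfer
        rw [integral_finsetSum _ fun j _ => hB.integrableOn_branch j hu]
        exact Finset.sum_congr rfl fun j _ => hB.setIntegral_branch j u
    _ ≤ ∑ j, ∫ y in I j, u y := Finset.sum_le_sum fun j _ =>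
        setIntegral_mono_set (hu.mono_set (hB.piece_subset j)) hu0'
          (hB.mapsTo j).image_subset.eventuallyLE
    _ = ∫ y in ⋃ j, I j, u y := (integral_iUnion_fintype hB.measurableSet_piece
        hB.pairwise_disjoint fun j => hu.mono_set (hB.piece_subset j)).symm
    _ ≤ ∫ y in S, u y := setIntegral_mono_set hu hu0'
        (iUnion_subset hB.piece_subset).eventuallyLE

theorem norm_transfer_le [Fintype ι] (hB : IsBranchSystem S I g w) {u : ℝ → E} {v : ℝ → ℝ}
    {x : ℝ} (hx : x ∈ S) (huv : ∀ j, ∀ y ∈ I j, ‖u y‖ ≤ v y) :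
    ‖transfer g w u x‖ ≤ transfer g w v x :=
  (norm_sum_le _ _).trans <| Finset.sum_le_sum fun j _ => by
    rw [norm_smul, Real.norm_of_nonneg (hB.weight_nonneg j hx), smul_eq_mul]
    exact mul_le_mul_of_nonneg_left (huv j _ (hB.mapsTo j hx)) (hB.weight_nonneg j hx)

/-- Lasota–Yorke inequality: the integrand is `‖(𝓛₁ h)'‖`, since `w • h' + Dw • h = (w • h)'`
(see `hasDerivAt_transfer`). -/
theorem integral_norm_transfer_deriv_le [Fintype ι] [CompleteSpace E]
    (hB : IsBranchSystem S I g w) {h h' : ℝ → E} {Dw : ℝ → ℝ} {c M : ℝ} (hc : 0 ≤ c)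
    (hM : 0 ≤ M) (hwc : ∀ j, ∀ y ∈ I j, w y ≤ c) (hhM : ∀ y ∈ S, ‖h y‖ ≤ M)
    (hh' : IntegrableOn h' S) (hDw : IntegrableOn Dw S) :
    ∫ x in S, ‖transfer g w (fun y => w y • h' y + Dw y • h y) x‖ ≤
      c * (∫ x in S, ‖h' x‖) + M * ∫ x in S, |Dw x| := by
  set v : ℝ → ℝ := fun y => c * ‖h' y‖ + M * |Dw y|
  have hv : IntegrableOn v S := (hh'.norm.const_mul c).add (hDw.abs.const_mul M)
  have hpt : ∀ j, ∀ y ∈ I j, ‖w y • h' y + Dw y • h y‖ ≤ v y := fun j y hy => by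
    calc ‖w y • h' y + Dw y • h y‖ ≤ w y * ‖h' y‖ + |Dw y| * ‖h y‖ := by
          refine (norm_add_le _ _).trans_eq ?_
          rw [norm_smul, norm_smul, Real.norm_of_nonneg (hB.nonneg j y hy), Real.norm_eq_abs]
      _ ≤ c * ‖h' y‖ + |Dw y| * M := by
          gcongr
          exacts [hwc j y hy, hhM y (hB.piece_subset j hy)]
      _ = v y := by ring
  calc ∫ x in S, ‖transfer g w (fun y => w y • h' y + Dw y • h y) x‖
      ≤ ∫ x in S, transfer g w v x :=
        integral_mono_of_nonneg (ae_of_all _ fun _ => norm_nonneg _)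
          (hB.integrableOn_transfer hv) ((ae_restrict_iff' hB.measurableSet).2
            (ae_of_all _ fun x hx => hB.norm_transfer_le hx hpt))
    _ ≤ ∫ y in S, v y := hB.setIntegral_transfer_le hv fun y => by positivity
    _ = c * (∫ x in S, ‖h' x‖) + M * ∫ x in S, |Dw x| := by
        rw [integral_add (hh'.norm.const_mul c) (hDw.abs.const_mul M), integral_const_mul,
          integral_const_mul]

theorem norm_le_of_smul_deriv_eq_transfer {𝕜 : Type*} [NormedField 𝕜] [NormedSpace 𝕜 E]
    [Fintype ι] [CompleteSpace E] (hB : IsBranchSystem S I g w) {h h' : ℝ → E} {Dw : ℝ → ℝ}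
    {c : ℝ} {ν : 𝕜} (hc : 0 ≤ c) (hwc : ∀ j, ∀ y ∈ I j, w y ≤ c)
    (hhM : ∀ y ∈ S, ‖h y‖ ≤ ∫ x in S, ‖h' x‖) (hpos : 0 < ∫ x in S, ‖h' x‖)
    (hh' : IntegrableOn h' S) (hDw : IntegrableOn Dw S)
    (hderiv : ∀ x ∈ S, ν • h' x = transfer g w (fun y => w y • h' y + Dw y • h y) x) :
    ‖ν‖ ≤ c + ∫ x in S, |Dw x| := by
  refine le_of_mul_le_mul_right ?_ hpos
  calc ‖ν‖ * ∫ x in S, ‖h' x‖ = ∫ x in S, ‖ν • h' x‖ := by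
        simp_rw [norm_smul]
        exact (integral_const_mul _ _).symm
    _ = ∫ x in S, ‖transfer g w (fun y => w y • h' y + Dw y • h y) x‖ :=
        setIntegral_congr_fun hB.measurableSet fun x hx => by rw [hderiv x hx]
    _ ≤ c * (∫ x in S, ‖h' x‖) + (∫ x in S, ‖h' x‖) * ∫ x in S, |Dw x| :=
        hB.integral_norm_transfer_deriv_le hc hpos.le hwc hhM hh' hDw
    _ = (c + ∫ x in S, |Dw x|) * ∫ x in S, ‖h' x‖ := by ring

end IsBranchSystem

theorem Monotone.pairwise_disjoint_on_Ioo_castSucc_succ {α : Type*} [Preorder α] {N : ℕ}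
    {p : Fin (N + 1) → α} (hp : Monotone p) :
    Pairwise (Disjoint on fun j : Fin N => Ioo (p j.castSucc) (p j.succ)) :=
  (pairwise_disjoint_on _).2 fun _ _ hjk => disjoint_left.2 fun _ hxj hxk =>
    lt_irrefl _ ((hxj.2.trans_le (hp (Fin.succ_le_castSucc_iff.2 hjk))).trans hxk.1)

theorem Monotone.Ioo_castSucc_succ_subset {α : Type*} [Preorder α] {N : ℕ}
    {p : Fin (N + 1) → α} (hp : Monotone p) (j : Fin N) :
    Ioo (p j.castSucc) (p j.succ) ⊆ Ioo (p 0) (p (Fin.last N)) :=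
  Ioo_subset_Ioo (hp (Fin.zero_le _)) (hp (Fin.le_last _))

theorem isBranchSystem_Ioo_partition {N : ℕ} {p : Fin (N + 1) → ℝ} (hp : Monotone p)
    {a b : ℝ} (hpa : p 0 = a) (hpb : p (Fin.last N) = b) {g : Fin N → ℝ → ℝ} {w : ℝ → ℝ}
    (hg : ∀ j : Fin N, MapsTo (g j) (Ioo a b) (Ioo (p j.castSucc) (p j.succ)))
    (hinj : ∀ j, InjOn (g j) (Ioo a b))
    (hg' : ∀ j, ∀ x ∈ Ioo a b, HasDerivAt (g j) (w (g j x)) x)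
    (hw : ∀ j : Fin N, ∀ y ∈ Ioo (p j.castSucc) (p j.succ), 0 ≤ w y) :
    IsBranchSystem (Ioo a b) (fun j : Fin N => Ioo (p j.castSucc) (p j.succ)) g w where
  measurableSet := measurableSet_Ioo
  measurableSet_piece _ := measurableSet_Ioo
  pairwise_disjoint := hp.pairwise_disjoint_on_Ioo_castSucc_succ
  piece_subset := hpa ▸ hpb ▸ hp.Ioo_castSucc_succ_subset
  mapsTo := hg
  injOn := hinj
  hasDerivAt := hg'
  nonneg := hw

theorem stmt9_general
    (N : ℕ) (p : Fin (N + 1) → ℝ) (hp : StrictMono p)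
    (hp0 : p 0 = 0) (hpN : p (Fin.last N) = 1)
    (f fd : ℝ → ℝ) (lam0 : ℝ) (hlam0 : 1 < lam0)
    (hexp : ∀ j : Fin N, ∀ x ∈ Set.Ioo (p j.castSucc) (p j.succ), lam0 ≤ fd x)
    (Df : ℝ → ℝ)
    (hDf : ∀ j : Fin N, ∀ x ∈ Set.Ioo (p j.castSucc) (p j.succ),
      HasDerivAt (fun y => (fd y)⁻¹) (Df x) x)
    (hDfint : IntegrableOn Df (Set.Ioo 0 1))
    (g : Fin N → ℝ → ℝ)
    (hgmem : ∀ j : Fin N, ∀ x ∈ Set.Ioo (0:ℝ) 1, g j x ∈ Set.Ioo (p j.castSucc) (p j.succ))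
    (hgf : ∀ j : Fin N, ∀ x ∈ Set.Ioo (0:ℝ) 1, f (g j x) = x)
    (hgd : ∀ j : Fin N, ∀ x ∈ Set.Ioo (0:ℝ) 1, HasDerivAt (g j) ((fd (g j x))⁻¹) x)
    (L1 : (ℝ → ℂ) → ℝ → ℂ)
    (hL1 : ∀ φ x, L1 φ x = ∑ j, φ (g j x) * ((fd (g j x) : ℂ))⁻¹)
    (τ : ℝ) (hτ : τ = lam0⁻¹ + ∫ y in (0:ℝ)..1, |Df y|)
    (ν : ℂ)
    (h h' : ℝ → ℂ) (hC : ContinuousOn h (Set.Icc 0 1))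
    (hh : ∀ x ∈ Set.Ioo (0:ℝ) 1, HasDerivAt h (h' x) x)
    (hh'int : IntegrableOn h' (Set.Ioo 0 1))
    (hmean : (∫ x in (0:ℝ)..1, h x) = 0)
    (hne : ∃ x ∈ Set.Icc (0:ℝ) 1, h x ≠ 0)
    (heig : ∀ x ∈ Set.Ioo (0:ℝ) 1, L1 h x = ν * h x) :
    ‖ν‖ ≤ τ := by
  set w : ℝ → ℝ := fun y => (fd y)⁻¹
  have hlam0_pos : 0 < lam0 := zero_lt_one.trans hlam0
  have hB := isBranchSystem_Ioo_partition hp.monotone hp0 hpN hgmem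
    (fun j => LeftInvOn.injOn (hgf j)) hgd
    fun j y hy => inv_nonneg.2 (hlam0_pos.le.trans (hexp j y hy))
  have hL : ∀ φ x, L1 φ x = transfer g w φ x := fun φ x => by
    rw [hL1, transfer]
    exact Finset.sum_congr rfl fun j _ => by rw [Complex.real_smul, Complex.ofReal_inv, mul_comm]
  set A := ∫ x in Ioo (0:ℝ) 1, ‖h' x‖
  have hhA : ∀ y ∈ Icc (0:ℝ) 1, ‖h y‖ ≤ A := fun y hy =>
    norm_le_integral_norm_deriv_of_integral_eq_zero one_pos hC hh hh'int hmean hy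
  have hA : 0 < A := by
    obtain ⟨x, hx, hx0⟩ := hne
    exact (norm_pos_iff.2 hx0).trans_le (hhA x hx)
  have hderiv : ∀ x ∈ Ioo (0:ℝ) 1,
      ν • h' x = transfer g w (fun y => w y • h' y + Df y • h y) x := fun x hx => by
    have hνh : (fun y => ν • h y) =ᶠ[nhds x] transfer g w h :=
      Filter.eventually_of_mem (isOpen_Ioo.mem_nhds hx) fun y hy => by
        show ν • h y = transfer g w h y
        rw [smul_eq_mul, ← heig y hy, hL]
    refine ((hh x hx).const_smul ν).unique
      ((hasDerivAt_transfer (fun j => hgd j x hx) fun j => ?_).congr_of_eventuallyEq hνh)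
    exact (hDf j _ (hgmem j x hx)).smul (hh _ (hB.piece_subset j (hgmem j x hx)))
  rw [hτ, intervalIntegral.integral_of_le zero_le_one, integral_Ioc_eq_integral_Ioo]
  exact hB.norm_le_of_smul_deriv_eq_transfer (inv_nonneg.2 hlam0_pos.le)
    (fun j y hy => inv_anti₀ hlam0_pos (hexp j y hy)) (fun y hy => hhA y (Ioo_subset_Icc_self hy))
    hA hh'int hDfint hderiv

/-- For a `C²` full branch expanding map of `[0,1]` with `f' ≥ λ > 1` and
`τ = λ⁻¹ + ∫₀¹ |(1/f')'|`, every eigenvalue `ν` of `𝓛₁` on `W^{1,1}` with `|ν| > λ⁻¹` whose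
eigenfunction has zero mean satisfies `|ν| ≤ τ`. -/
theorem stmt9
    (N : ℕ) (hN : 0 < N) (p : Fin (N + 1) → ℝ) (hp : StrictMono p)
    (hp0 : p 0 = 0) (hpN : p (Fin.last N) = 1)
    (f fd : ℝ → ℝ) (lam0 : ℝ) (hlam0 : 1 < lam0)
    (hfd : ∀ j : Fin N, ∀ x ∈ Set.Ioo (p j.castSucc) (p j.succ), HasDerivAt f (fd x) x)
    (hexp : ∀ j : Fin N, ∀ x ∈ Set.Ioo (p j.castSucc) (p j.succ), lam0 ≤ fd x)
    (Df : ℝ → ℝ)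
    (hDf : ∀ j : Fin N, ∀ x ∈ Set.Ioo (p j.castSucc) (p j.succ),
      HasDerivAt (fun y => (fd y)⁻¹) (Df x) x)
    (hDfint : IntegrableOn Df (Set.Ioo 0 1))
    (g : Fin N → ℝ → ℝ)
    (hgmem : ∀ j : Fin N, ∀ x ∈ Set.Ioo (0:ℝ) 1, g j x ∈ Set.Ioo (p j.castSucc) (p j.succ))
    (hgf : ∀ j : Fin N, ∀ x ∈ Set.Ioo (0:ℝ) 1, f (g j x) = x)
    (hgd : ∀ j : Fin N, ∀ x ∈ Set.Ioo (0:ℝ) 1, HasDerivAt (g j) ((fd (g j x))⁻¹) x)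
    (L1 : (ℝ → ℂ) → ℝ → ℂ)
    (hL1 : ∀ φ x, L1 φ x = ∑ j, φ (g j x) * ((fd (g j x) : ℂ))⁻¹)
    (τ : ℝ) (hτ : τ = lam0⁻¹ + ∫ y in (0:ℝ)..1, |Df y|)
    (ν : ℂ) (hν : lam0⁻¹ < ‖ν‖)
    (h h' : ℝ → ℂ) (hC : ContinuousOn h (Set.Icc 0 1))
    (hh : ∀ x ∈ Set.Ioo (0:ℝ) 1, HasDerivAt h (h' x) x)
    (hh'int : IntegrableOn h' (Set.Ioo 0 1))
    (hmean : (∫ x in (0:ℝ)..1, h x) = 0)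
    (hne : ∃ x ∈ Set.Icc (0:ℝ) 1, h x ≠ 0)
    (heig : ∀ x ∈ Set.Ioo (0:ℝ) 1, L1 h x = ν * h x) :
    ‖ν‖ ≤ τ :=
  stmt9_general N p hp hp0 hpN f fd lam0 hlam0 hexp Df hDf hDfint g hgmem hgf hgd L1 hL1 τ hτ ν h h'
    hC hh hh'int hmean hne heig
end

section
/- Let f ∈ 𝓔 be a full branch monotone map of [0,1] with f' ≥ 1, f' = 1 at only finitely many points, and ‖f'‖_∞ < ∞. Then f is expansive: there exists δ > 0 such that if |f^n(x) − f^n(y)| ≤ δ for all n ∈ ℕ₀, then x = y. -/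
/-!
Extend each branch of `f` to a continuous increasing map `F_j` of the closed branch
`[p_j, p_{j+1}]` onto `[0, 1]`. Since `F_j' = f' ≥ 1` with equality at finitely many points,
`F_j - id` is strictly increasing, and compactness turns this into a uniform gain: points at
distance at least `d` are pushed apart by at least `d + ε(d)`.

For `δ` small, two `δ`-close points with `δ`-close images lie in a common closed branch on which
`f` agrees with `F_j`. Indeed, points on either side of a partition point have images near `1`
and near `0`; and a partition point `δ`-close to a point of a branch must be an endpoint of it,
at which `f` must take the value `0` or `1` of `F_j`, since the finitely many other values
`f(p_i)` stay away from `0` and `1`. So the distance of two `δ`-shadowing orbits grows by `ε` at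
every step, which is absurd.
-/

open Set Filter Topology

theorem eq_of_forall_dist_iterate_le {α : Type*} [MetricSpace α] {T : α → α} {s : Set α}
    (hs : MapsTo T s s) {δ : ℝ}
    (hT : ∀ d > 0, ∃ ε > 0, ∀ x ∈ s, ∀ y ∈ s, d ≤ dist x y → dist x y ≤ δ →
      dist (T x) (T y) ≤ δ → dist x y + ε ≤ dist (T x) (T y))
    {x y : α} (hx : x ∈ s) (hy : y ∈ s) (hxy : ∀ n, dist (T^[n] x) (T^[n] y) ≤ δ) : x = y := by
  by_contra hne
  obtain ⟨ε, hε, hT⟩ := hT (dist x y) (dist_pos.2 hne)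
  have hgrow (n : ℕ) : dist x y + n * ε ≤ dist (T^[n] x) (T^[n] y) := by
    induction n with
    | zero => simp
    | succ n ih =>
      have hstep := hT _ (hs.iterate n hx) _ (hs.iterate n hy)
        ((le_add_of_nonneg_right (by positivity)).trans ih) (hxy n)
        (by simpa only [Function.iterate_succ_apply'] using hxy (n + 1))
      rw [Function.iterate_succ_apply', Function.iterate_succ_apply']
      push_cast
      linarith
  obtain ⟨n, hn⟩ := exists_nat_gt (δ / ε)
  rw [div_lt_iff₀ hε] at hn
  linarith [hgrow n, hxy n, dist_nonneg (x := x) (y := y)]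

theorem UniformContinuousOn.eventually_dist_le {α β : Type*} [PseudoMetricSpace α]
    [PseudoMetricSpace β] {g : α → β} {s : Set α} (hg : UniformContinuousOn g s) {ρ : ℝ}
    (hρ : 0 < ρ) :
    ∀ᶠ δ in 𝓝[>] 0, ∀ u ∈ s, ∀ w ∈ s, dist u w ≤ δ → dist (g u) (g w) ≤ ρ := by
  obtain ⟨δ₀, hδ₀, h⟩ := Metric.uniformContinuousOn_iff_le.1 hg ρ hρ
  filter_upwards [Ioc_mem_nhdsGT hδ₀] with δ hδ u hu w hw huw
  exact h u hu w hw (huw.trans hδ.2)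

theorem strictMonoOn_of_hasDerivAt_nonneg_of_finite {g g' : ℝ → ℝ} {a b : ℝ}
    (hg : ContinuousOn g (Icc a b)) (hderiv : ∀ x ∈ Ioo a b, HasDerivAt g (g' x) x)
    (hnonneg : ∀ x ∈ Ioo a b, 0 ≤ g' x) (hfin : {x ∈ Ioo a b | g' x = 0}.Finite) :
    StrictMonoOn g (Icc a b) := by
  have hmono : MonotoneOn g (Icc a b) :=
    monotoneOn_of_hasDerivWithinAt_nonneg (convex_Icc a b) hg
      (by simpa only [interior_Icc] using fun x hx => (hderiv x hx).hasDerivWithinAt)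
      (by simpa only [interior_Icc] using hnonneg)
  intro u hu w hw huw
  refine (hmono hu hw huw.le).lt_of_ne fun heq => Ioo_infinite huw (hfin.subset fun t ht => ?_)
  have htab : t ∈ Ioo a b := ⟨hu.1.trans_lt ht.1, ht.2.trans_le hw.2⟩
  have hconst : g =ᶠ[𝓝 t] fun _ => g u := by
    filter_upwards [Ioo_mem_nhds ht.1 ht.2] with s hs
    have hs' : s ∈ Icc a b := ⟨hu.1.trans hs.1.le, hs.2.le.trans hw.2⟩
    exact le_antisymm (heq ▸ hmono hs' hw hs.2.le) (hmono hu hs' hs.1.le)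
  exact ⟨htab, (hderiv t htab).unique ((hasDerivAt_const t (g u)).congr_of_eventuallyEq hconst)⟩

theorem eventually_add_le_dist_of_strictMonoOn_sub {g : ℝ → ℝ} {a b d : ℝ}
    (hg : ContinuousOn g (Icc a b)) (hsub : StrictMonoOn (fun x => g x - x) (Icc a b))
    (hd : 0 < d) :
    ∀ᶠ ε in 𝓝[>] 0, ∀ u ∈ Icc a b, ∀ w ∈ Icc a b, d ≤ dist u w →
      dist u w + ε ≤ dist (g u) (g w) := by
  have hsmall : Icc a (b - d) ⊆ Icc a b := Icc_subset_Icc_right (by linarith)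
  have hshift : MapsTo (· + d) (Icc a (b - d)) (Icc a b) := fun u hu =>
    ⟨by linarith [hu.1], by linarith [hu.2]⟩
  have hcont : ContinuousOn (fun u => (g (u + d) - (u + d)) - (g u - u)) (Icc a (b - d)) :=
    ((hg.comp (continuousOn_id.add continuousOn_const) hshift).sub
      (continuousOn_id.add continuousOn_const)).sub ((hg.mono hsmall).sub continuousOn_id)
  obtain ⟨ε₀, hε₀, hgain⟩ := isCompact_Icc.exists_forall_le' hcont
    fun u hu => sub_pos.2 (hsub (hsmall hu) (hshift hu) (lt_add_of_pos_right u hd))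
  filter_upwards [Ioc_mem_nhdsGT hε₀] with ε hε u hu w hw huw
  wlog huw' : u ≤ w generalizing u w
  · rw [dist_comm, dist_comm (g u)]
    exact this w hw u hu (dist_comm u w ▸ huw) (le_of_not_ge huw')
  rw [Real.dist_eq, abs_sub_comm, abs_of_nonneg (sub_nonneg.2 huw')] at huw ⊢
  have hud : u ∈ Icc a (b - d) := ⟨hu.1, by linarith [hw.2]⟩
  have hmono := hsub.monotoneOn (hshift hud) hw (by simp only; linarith)
  have := hgain u hud
  simp only at hmono this
  rw [Real.dist_eq, abs_sub_comm]
  linarith [le_abs_self (g w - g u), hε.2]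

/-- The branch `f|(a, b)`, sent to `0` at `a` and to `1` at `b`, and continued by lines of slope
one outside `[a, b]`: this makes it a monotone surjection of `ℝ`, hence continuous. -/
noncomputable def branchExt (f : ℝ → ℝ) (a b x : ℝ) : ℝ :=
  if x ≤ a then x - a else if b ≤ x then x - b + 1 else f x

namespace branchExt

variable {f : ℝ → ℝ} {a b : ℝ}

theorem apply_left : branchExt f a b a = 0 := by simp [branchExt]

theorem apply_right (hab : a < b) : branchExt f a b b = 1 := by
  simp [branchExt, hab.not_ge]

theorem eqOn : EqOn f (branchExt f a b) (Ioo a b) := fun x hx => by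
  simp [branchExt, hx.1.not_ge, hx.2.not_ge]

theorem monotone (hmono : StrictMonoOn f (Ioo a b)) (hmaps : MapsTo f (Ioo a b) (Ioo 0 1)) :
    Monotone (branchExt f a b) := by
  intro x y hxy
  unfold branchExt
  have hI {z : ℝ} (h₁ : ¬z ≤ a) (h₂ : ¬b ≤ z) : z ∈ Ioo a b := ⟨lt_of_not_ge h₁, lt_of_not_ge h₂⟩
  split_ifs <;> try linarith
  · rename_i hya hyb
    linarith [(hmaps (hI hya hyb)).1]
  · rename_i hxa hxb _ _
    linarith [(hmaps (hI hxa hxb)).2]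
  · rename_i hxa hxb hya hyb
    exact hmono.monotoneOn (hI hxa hxb) (hI hya hyb) hxy

theorem surjective (hab : a < b) (hsurj : SurjOn f (Ioo a b) (Ioo 0 1)) :
    Function.Surjective (branchExt f a b) := by
  intro v
  rcases le_or_gt v 0 with hv0 | hv0
  · exact ⟨v + a, by rw [branchExt, if_pos (by linarith)]; ring⟩
  rcases le_or_gt 1 v with hv1 | hv1
  · exact ⟨v - 1 + b, by rw [branchExt, if_neg (by linarith), if_pos (by linarith)]; ring⟩
  obtain ⟨x, hx, rfl⟩ := hsurj ⟨hv0, hv1⟩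
  exact ⟨x, (eqOn hx).symm⟩

theorem continuous (hab : a < b) (hmono : StrictMonoOn f (Ioo a b))
    (himage : f '' Ioo a b = Ioo 0 1) : Continuous (branchExt f a b) :=
  (monotone hmono (himage ▸ mapsTo_image f _)).continuous_of_surjective
    (surjective hab (himage ▸ surjOn_image f _))

theorem strictMonoOn_sub {fd : ℝ → ℝ} (hcont : ContinuousOn (branchExt f a b) (Icc a b))
    (hfd : ∀ x ∈ Ioo a b, HasDerivAt f (fd x) x) (hfd1 : ∀ x ∈ Ioo a b, 1 ≤ fd x)
    (hfin : {x ∈ Ioo a b | fd x = 1}.Finite) :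
    StrictMonoOn (fun x => branchExt f a b x - x) (Icc a b) :=
  strictMonoOn_of_hasDerivAt_nonneg_of_finite (hcont.sub continuousOn_id)
    (fun x hx => ((hfd x hx).congr_of_eventuallyEq
      (eqOn.eventuallyEq_of_mem (Ioo_mem_nhds hx.1 hx.2)).symm).sub (hasDerivAt_id x))
    (fun x hx => sub_nonneg.2 (hfd1 x hx))
    (hfin.subset fun _ hx => ⟨hx.1, sub_eq_zero.1 hx.2⟩)

end branchExt

theorem exists_mem_Ioo_of_notMem_range {α : Type*} [LinearOrder α] {N : ℕ} {p : Fin (N + 1) → α}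
    {t : α} (ht : t ∈ Icc (p 0) (p (Fin.last N))) (hnt : t ∉ range p) :
    ∃ j : Fin N, t ∈ Ioo (p j.castSucc) (p j.succ) := by
  by_contra! h
  have hlt (k : Fin (N + 1)) : p k < t := by
    induction k using Fin.induction with
    | zero => exact ht.1.lt_of_ne fun e => hnt ⟨0, e⟩
    | succ j ih => exact (le_of_not_gt fun h' => h j ⟨ih, h'⟩).lt_of_ne fun e => hnt ⟨_, e⟩
  exact (hlt (Fin.last N)).not_ge ht.2

theorem StrictMono.apply_notMem_Ioo {α : Type*} [LinearOrder α] {N : ℕ} {p : Fin (N + 1) → α}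
    (hp : StrictMono p) (i : Fin (N + 1)) (j : Fin N) : p i ∉ Ioo (p j.castSucc) (p j.succ) := by
  rintro ⟨h₁, h₂⟩
  rw [hp.lt_iff_lt] at h₁ h₂
  exact (Fin.castSucc_lt_iff_succ_le.1 h₁).not_gt h₂

section ClosePairs

variable {N : ℕ} {p : Fin (N + 1) → ℝ} {f : ℝ → ℝ} {F : Fin N → ℝ → ℝ} {δ ρ η : ℝ}

theorem eq_of_dist_le_of_mem_Ioo (hp : StrictMono p)
    (hfF : ∀ j, EqOn f (F j) (Ioo (p j.castSucc) (p j.succ)))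
    (hF0 : ∀ j, F j (p j.castSucc) = 0) (hF1 : ∀ j, F j (p j.succ) = 1)
    (hFρ : ∀ j, ∀ u ∈ Icc (p j.castSucc) (p j.succ), ∀ w ∈ Icc (p j.castSucc) (p j.succ),
      dist u w ≤ δ → dist (F j u) (F j w) ≤ ρ)
    (hδρ : δ ≤ ρ) (hρ : 3 * ρ < 1) {j k : Fin N} {X Y : ℝ}
    (hX : X ∈ Ioo (p j.castSucc) (p j.succ)) (hY : Y ∈ Ioo (p k.castSucc) (p k.succ))
    (hXY : dist X Y ≤ δ) (hfXY : dist (f X) (f Y) ≤ δ) : j = k := by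
  wlog hjk : j ≤ k generalizing j k X Y
  · exact (this hY hX (dist_comm X Y ▸ hXY) (dist_comm (f X) _ ▸ hfXY) (le_of_not_ge hjk)).symm
  refine hjk.eq_or_lt.resolve_right fun hlt => ?_
  have hgap : p j.succ ≤ p k.castSucc := hp.monotone (Fin.succ_le_castSucc_iff.2 hlt)
  rw [Real.dist_eq, abs_le] at hXY
  have hX1 := hFρ j X (Ioo_subset_Icc_self hX) _ (right_mem_Icc.2 (hp j.castSucc_lt_succ).le)
    (by rw [Real.dist_eq, abs_le]; constructor <;> linarith [hX.2, hY.1])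
  have hY0 := hFρ k _ (left_mem_Icc.2 (hp k.castSucc_lt_succ).le) Y (Ioo_subset_Icc_self hY)
    (by rw [Real.dist_eq, abs_le]; constructor <;> linarith [hX.2, hY.1])
  rw [hF1, ← hfF j hX, Real.dist_eq, abs_le] at hX1
  rw [hF0, ← hfF k hY, Real.dist_eq, abs_le] at hY0
  rw [Real.dist_eq, abs_le] at hfXY
  linarith [hX1.2, hY0.1, hfXY.1]

theorem mem_Icc_and_eq_of_dist_le (hp : StrictMono p)
    (hfF : ∀ j, EqOn f (F j) (Ioo (p j.castSucc) (p j.succ)))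
    (hF0 : ∀ j, F j (p j.castSucc) = 0) (hF1 : ∀ j, F j (p j.succ) = 1)
    (hFρ : ∀ j, ∀ u ∈ Icc (p j.castSucc) (p j.succ), ∀ w ∈ Icc (p j.castSucc) (p j.succ),
      dist u w ≤ δ → dist (F j u) (F j w) ≤ ρ)
    (hsep_p : ∀ i i', p i ≠ p i' → η ≤ dist (p i) (p i'))
    (hsep_0 : ∀ i, f (p i) ≠ 0 → η ≤ dist (f (p i)) 0)
    (hsep_1 : ∀ i, f (p i) ≠ 1 → η ≤ dist (f (p i)) 1)
    (hδρ : δ ≤ ρ) (hρη : 2 * ρ < η) (hρ : 3 * ρ < 1) {j : Fin N} {X Y : ℝ}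
    (hX : X ∈ Icc (p 0) (p (Fin.last N))) (hY : Y ∈ Ioo (p j.castSucc) (p j.succ))
    (hXY : dist X Y ≤ δ) (hfXY : dist (f X) (f Y) ≤ δ) :
    X ∈ Icc (p j.castSucc) (p j.succ) ∧ f X = F j X := by
  by_cases hXp : X ∈ range p
  swap
  · obtain ⟨k, hk⟩ := exists_mem_Ioo_of_notMem_range hX hXp
    obtain rfl := eq_of_dist_le_of_mem_Ioo hp hfF hF0 hF1 hFρ hδρ hρ hk hY hXY hfXY
    exact ⟨Ioo_subset_Icc_self hk, hfF k hk⟩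
  obtain ⟨i, rfl⟩ := hXp
  have hab := (hp j.castSucc_lt_succ).le
  have hXY' := abs_le.1 (Real.dist_eq _ _ ▸ hXY)
  have hfY := hfF j hY
  rcases not_and_or.1 (hp.apply_notMem_Ioo i j) with hi | hi <;> push Not at hi
  · have hia : p i = p j.castSucc := by
      by_contra hne
      have := hsep_p i _ hne
      rw [Real.dist_eq, abs_of_nonpos (by linarith)] at this
      linarith [hY.1]
    rw [hia] at hXY hfXY ⊢
    have hY0 := hFρ j _ (left_mem_Icc.2 hab) Y (Ioo_subset_Icc_self hY) hXY
    rw [hF0, ← hfY] at hY0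
    refine ⟨left_mem_Icc.2 hab, ?_⟩
    rw [hF0]
    by_contra hne
    linarith [hsep_0 _ hne, dist_triangle (f (p j.castSucc)) (f Y) 0, dist_comm (f Y) 0]
  · have hib : p i = p j.succ := by
      by_contra hne
      have := hsep_p i _ hne
      rw [Real.dist_eq, abs_of_nonneg (by linarith)] at this
      linarith [hY.2]
    rw [hib] at hXY hfXY ⊢
    have hY1 := hFρ j _ (right_mem_Icc.2 hab) Y (Ioo_subset_Icc_self hY) hXY
    rw [hF1, ← hfY] at hY1
    refine ⟨right_mem_Icc.2 hab, ?_⟩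
    rw [hF1]
    by_contra hne
    linarith [hsep_1 _ hne, dist_triangle (f (p j.succ)) (f Y) 1, dist_comm (f Y) 1]

theorem exists_mem_Icc_of_dist_le (hp : StrictMono p)
    (hfF : ∀ j, EqOn f (F j) (Ioo (p j.castSucc) (p j.succ)))
    (hF0 : ∀ j, F j (p j.castSucc) = 0) (hF1 : ∀ j, F j (p j.succ) = 1)
    (hFρ : ∀ j, ∀ u ∈ Icc (p j.castSucc) (p j.succ), ∀ w ∈ Icc (p j.castSucc) (p j.succ),
      dist u w ≤ δ → dist (F j u) (F j w) ≤ ρ)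
    (hsep_p : ∀ i i', p i ≠ p i' → η ≤ dist (p i) (p i'))
    (hsep_0 : ∀ i, f (p i) ≠ 0 → η ≤ dist (f (p i)) 0)
    (hsep_1 : ∀ i, f (p i) ≠ 1 → η ≤ dist (f (p i)) 1)
    (hδρ : δ ≤ ρ) (hρη : 2 * ρ < η) (hρ : 3 * ρ < 1) {X Y : ℝ}
    (hX : X ∈ Icc (p 0) (p (Fin.last N))) (hY : Y ∈ Icc (p 0) (p (Fin.last N))) (hne : X ≠ Y)
    (hXY : dist X Y ≤ δ) (hfXY : dist (f X) (f Y) ≤ δ) :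
    ∃ j, X ∈ Icc (p j.castSucc) (p j.succ) ∧ Y ∈ Icc (p j.castSucc) (p j.succ) ∧
      f X = F j X ∧ f Y = F j Y := by
  by_cases hYp : Y ∈ range p
  · by_cases hXp : X ∈ range p
    · obtain ⟨i, rfl⟩ := hXp
      obtain ⟨i', rfl⟩ := hYp
      linarith [hsep_p i i' hne, dist_nonneg.trans hXY]
    obtain ⟨j, hj⟩ := exists_mem_Ioo_of_notMem_range hX hXp
    obtain ⟨hYj, hfY⟩ := mem_Icc_and_eq_of_dist_le hp hfF hF0 hF1 hFρ hsep_p hsep_0 hsep_1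
      hδρ hρη hρ hY hj (dist_comm X Y ▸ hXY) (dist_comm (f X) _ ▸ hfXY)
    exact ⟨j, Ioo_subset_Icc_self hj, hYj, hfF j hj, hfY⟩
  obtain ⟨j, hj⟩ := exists_mem_Ioo_of_notMem_range hY hYp
  obtain ⟨hXj, hfX⟩ := mem_Icc_and_eq_of_dist_le hp hfF hF0 hF1 hFρ hsep_p hsep_0 hsep_1
    hδρ hρη hρ hX hj hXY hfXY
  exact ⟨j, hXj, Ioo_subset_Icc_self hj, hfX, hfF j hj⟩

end ClosePairs

theorem exists_pos_le_dist_partition_values {N : ℕ} (p : Fin (N + 1) → ℝ) (f : ℝ → ℝ) :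
    ∃ η > 0, (∀ i i', p i ≠ p i' → η ≤ dist (p i) (p i')) ∧
      (∀ i, f (p i) ≠ 0 → η ≤ dist (f (p i)) 0) ∧ (∀ i, f (p i) ≠ 1 → η ≤ dist (f (p i)) 1) := by
  set S : Set ℝ := insert 0 (insert 1 (range p ∪ range (f ∘ p)))
  have hpS (i : Fin (N + 1)) : p i ∈ S := by simp [S]
  have hfS (i : Fin (N + 1)) : f (p i) ∈ S := by simp [S]
  refine ⟨S.infsep, ((((finite_range p).union (finite_range _)).insert 1).insert 0
    |>.infsep_pos_iff_nontrivial).2 ⟨0, by simp, 1, by simp, zero_ne_one⟩,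
    fun i i' => infsep_le_dist_of_mem (hpS i) (hpS i'),
    fun i => infsep_le_dist_of_mem (hfS i) (by simp [S]),
    fun i => infsep_le_dist_of_mem (hfS i) (by simp [S])⟩

theorem exists_pos_forall_add_le_dist_branchExt {N : ℕ} {p : Fin (N + 1) → ℝ} {f fd : ℝ → ℝ}
    (hp : StrictMono p)
    (hfd : ∀ j : Fin N, ∀ x ∈ Ioo (p j.castSucc) (p j.succ), HasDerivAt f (fd x) x)
    (hmono : ∀ j : Fin N, StrictMonoOn f (Ioo (p j.castSucc) (p j.succ)))
    (hfull : ∀ j : Fin N, f '' Ioo (p j.castSucc) (p j.succ) = Ioo 0 1)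
    (hfd1 : ∀ j : Fin N, ∀ x ∈ Ioo (p j.castSucc) (p j.succ), 1 ≤ fd x)
    (hfin : ∀ j : Fin N, {x ∈ Ioo (p j.castSucc) (p j.succ) | fd x = 1}.Finite)
    {d : ℝ} (hd : 0 < d) :
    ∃ ε > 0, ∀ j : Fin N, ∀ u ∈ Icc (p j.castSucc) (p j.succ), ∀ w ∈ Icc (p j.castSucc) (p j.succ),
      d ≤ dist u w → dist u w + ε ≤ dist (branchExt f (p j.castSucc) (p j.succ) u)
        (branchExt f (p j.castSucc) (p j.succ) w) := by
  have hcont (j : Fin N) :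
      ContinuousOn (branchExt f (p j.castSucc) (p j.succ)) (Icc (p j.castSucc) (p j.succ)) :=
    (branchExt.continuous (hp j.castSucc_lt_succ) (hmono j) (hfull j)).continuousOn
  obtain ⟨ε, hexp, hε⟩ := ((eventually_all.2 fun j =>
    eventually_add_le_dist_of_strictMonoOn_sub (hcont j)
      (branchExt.strictMonoOn_sub (hcont j) (hfd j) (hfd1 j) (hfin j)) hd).and
    self_mem_nhdsWithin).exists
  exact ⟨ε, hε, hexp⟩

theorem stmt13_general
    (N : ℕ) (p : Fin (N + 1) → ℝ) (hp : StrictMono p)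
    (hp0 : p 0 = 0) (hpN : p (Fin.last N) = 1)
    (f fd : ℝ → ℝ)
    (hmaps : Set.MapsTo f (Set.Icc 0 1) (Set.Icc 0 1))
    (hfd : ∀ i : Fin N, ∀ x ∈ Set.Ioo (p i.castSucc) (p i.succ), HasDerivAt f (fd x) x)
    (hmono : ∀ i : Fin N, StrictMonoOn f (Set.Ioo (p i.castSucc) (p i.succ)))
    (hfull : ∀ i : Fin N, f '' Set.Ioo (p i.castSucc) (p i.succ) = Set.Ioo 0 1)
    (hfd1 : ∀ x ∈ Set.Icc (0:ℝ) 1, 1 ≤ fd x)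
    (hfin : {x | x ∈ Set.Icc (0:ℝ) 1 ∧ fd x = 1}.Finite) :
    ∃ δ > 0, ∀ x ∈ Set.Icc (0:ℝ) 1, ∀ y ∈ Set.Icc (0:ℝ) 1,
      (∀ n : ℕ, |f^[n] x - f^[n] y| ≤ δ) → x = y := by
  have hab (j : Fin N) : p j.castSucc < p j.succ := hp j.castSucc_lt_succ
  have hbranch (j : Fin N) : Ioo (p j.castSucc) (p j.succ) ⊆ Icc 0 1 :=
    Ioo_subset_Icc_self.trans <| hp0 ▸ hpN ▸ Icc_subset_Icc (hp.monotone (Fin.zero_le _))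
      (hp.monotone (Fin.le_last _))
  obtain ⟨η, hη, hsep_p, hsep_0, hsep_1⟩ := exists_pos_le_dist_partition_values p f
  have hρ : 0 < min (η / 3) (1 / 4) := by positivity
  obtain ⟨δ, hFδ, hδ, hδρ⟩ := ((eventually_all.2 fun j =>
    (isCompact_Icc.uniformContinuousOn_of_continuous
      (branchExt.continuous (hab j) (hmono j) (hfull j)).continuousOn).eventually_dist_le
      hρ).and (Ioc_mem_nhdsGT hρ)).exists
  refine ⟨δ, hδ, fun x hx y hy hxy => eq_of_forall_dist_iterate_le hmaps (fun d hd => ?_) hx hy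
    (by simpa only [Real.dist_eq] using hxy)⟩
  obtain ⟨ε, hε, hexp⟩ := exists_pos_forall_add_le_dist_branchExt hp hfd hmono hfull
    (fun j x hx => hfd1 x (hbranch j hx))
    (fun j => hfin.subset fun x hx => ⟨hbranch j hx.1, hx.2⟩) hd
  refine ⟨ε, hε, fun X hX Y hY hdXY hXY hfXY => ?_⟩
  obtain ⟨j, hXj, hYj, hfX, hfY⟩ := exists_mem_Icc_of_dist_le hp (fun j => branchExt.eqOn)
    (fun j => branchExt.apply_left) (fun j => branchExt.apply_right (hab j)) hFδ hsep_p hsep_0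
    hsep_1 hδρ (by linarith [min_le_left (η / 3) (1 / 4)])
    (by linarith [min_le_right (η / 3) (1 / 4)]) (by rwa [hp0, hpN]) (by rwa [hp0, hpN])
    (dist_pos.1 (hd.trans_le hdXY)) hXY hfXY
  rw [hfX, hfY]
  exact hexp j X hXj Y hYj hdXY

/-- A full branch monotone map of `[0,1]` with `f' ≥ 1`, `f' = 1` at only
finitely many points and `‖f'‖_∞ < ∞`, is expansive: there is `δ > 0` such that if two orbits
stay `δ`-close forever, the initial points coincide. -/
theorem stmt13
    (N : ℕ) (hN : 0 < N) (p : Fin (N + 1) → ℝ) (hp : StrictMono p)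
    (hp0 : p 0 = 0) (hpN : p (Fin.last N) = 1)
    (f fd : ℝ → ℝ) (Λ : ℝ)
    (hmaps : Set.MapsTo f (Set.Icc 0 1) (Set.Icc 0 1))
    (hfd : ∀ i : Fin N, ∀ x ∈ Set.Ioo (p i.castSucc) (p i.succ), HasDerivAt f (fd x) x)
    (hfdc : ∀ i : Fin N, ContinuousOn fd (Set.Icc (p i.castSucc) (p i.succ)))
    (hmono : ∀ i : Fin N, StrictMonoOn f (Set.Ioo (p i.castSucc) (p i.succ)))
    (hfull : ∀ i : Fin N, f '' Set.Ioo (p i.castSucc) (p i.succ) = Set.Ioo 0 1)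
    (hfd1 : ∀ x ∈ Set.Icc (0:ℝ) 1, 1 ≤ fd x)
    (hfin : {x | x ∈ Set.Icc (0:ℝ) 1 ∧ fd x = 1}.Finite)
    (hΛ : ∀ x ∈ Set.Icc (0:ℝ) 1, fd x ≤ Λ) :
    ∃ δ > 0, ∀ x ∈ Set.Icc (0:ℝ) 1, ∀ y ∈ Set.Icc (0:ℝ) 1,
      (∀ n : ℕ, |f^[n] x - f^[n] y| ≤ δ) → x = y :=
  stmt13_general N p hp hp0 hpN f fd hmaps hfd hmono hfull hfd1 hfin
end
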